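/- arXiv:math/0302054 — 6 statements merged into one kernel-verified Lean document; each statement's English description precedes it below -/
import Mathlib

section
/- Let m_1,…,m_n be positive integers, let 1 ≤ t ≤ n with m_t ≥ 2, and let (x_1,…,x_n) lie in the open unit polydisc with x_t ≠ 0. Then the function u ↦ Li_{m_1,…,m_n}(x_1,…,x_{t-1},u,x_{t+1},…,x_n) is complex differentiable at u = x_t with derivative Li_{m_1,…,m_{t-1},m_t−1,m_{t+1},…,m_n}(x_1,…,x_n) / x_t. -/
/-!
Each summand depends on `x_t` only through the monomial `x_t ^ k_t`, so it can be differentiated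
term by term. On a disc `‖u‖ < r` with `max_i ‖x_i‖ < r < 1`, the derivatives of the summands are
dominated by `∏ i, k_i r^(k_i - 1)`, which is summable over all of `ℕ^n` because it is a product
of derivatives of geometric series; the derivative `k_t x_t^(k_t - 1) / k_t^(m_t)` of the monomial
term is `x_t^(k_t) / k_t^(m_t - 1)` divided by `x_t`.
-/

/-- The multiple polylogarithm `Li_{m₁,…,mₙ}(x₁,…,xₙ)`, defined as the sum of the series
`∑_{0<k₁<⋯<kₙ} x₁^{k₁}⋯xₙ^{kₙ}/(k₁^{m₁}⋯kₙ^{mₙ})`. -/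
noncomputable def multiPolylog (n : ℕ) (m : Fin n → ℕ) (x : Fin n → ℂ) : ℂ :=
  ∑' k : {k : Fin n → ℕ // StrictMono k ∧ ∀ i, 0 < k i},
    ∏ i, x i ^ (k.1 i) / ((k.1 i : ℂ)) ^ (m i)

open Function Finset Filter Topology

theorem summable_pi_prod_of_nonneg {ι : Type*} [Fintype ι] {κ : ι → Type*}
    {f : ∀ i, κ i → ℝ} (hf0 : ∀ i j, 0 ≤ f i j) (hf : ∀ i, Summable (f i)) :
    Summable fun k : ∀ i, κ i => ∏ i, f i (k i) := by
  classical
  refine summable_of_sum_le (c := ∏ i, ∑' j, f i j)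
    (fun k => prod_nonneg fun i _ => hf0 i (k i)) fun s => ?_
  calc ∑ k ∈ s, ∏ i, f i (k i)
      ≤ ∑ k ∈ Fintype.piFinset fun i => s.image (· i), ∏ i, f i (k i) :=
        sum_le_sum_of_subset_of_nonneg
          (fun k hk => Fintype.mem_piFinset.2 fun i => mem_image_of_mem _ hk)
          fun k _ _ => prod_nonneg fun i _ => hf0 i (k i)
    _ = ∏ i, ∑ j ∈ s.image (· i), f i j := (prod_univ_sum _ _).symm
    _ ≤ ∏ i, ∑' j, f i j :=
        prod_le_prod (fun i _ => sum_nonneg fun j _ => hf0 i j)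
          fun i _ => (hf i).sum_le_tsum _ fun j _ => hf0 i j

theorem summable_natCast_mul_pow_sub_one {R : Type*} [NormedRing R] [HasSummableGeomSeries R]
    {r : R} (hr : ‖r‖ < 1) : Summable fun j : ℕ => (j : R) * r ^ (j - 1) := by
  rw [← summable_nat_add_iff 1]
  simpa using summable_choose_mul_geometric_of_norm_lt_one 1 hr

theorem pow_le_natCast_mul_pow_sub_one {r : ℝ} (hr0 : 0 ≤ r) (hr1 : r ≤ 1) {j : ℕ}
    (hj : 0 < j) : r ^ j ≤ j * r ^ (j - 1) := by
  obtain ⟨l, rfl⟩ := Nat.exists_eq_add_one_of_ne_zero hj.ne'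
  simp only [Nat.add_sub_cancel, pow_succ, Nat.cast_add, Nat.cast_one]
  nlinarith [pow_nonneg hr0 l, mul_nonneg (Nat.cast_nonneg (α := ℝ) l) (pow_nonneg hr0 l)]

variable {ι 𝕜 : Type*} [RCLike 𝕜]

theorem norm_pow_div_natCast_pow_le (z : 𝕜) {j : ℕ} (hj : 0 < j) (a : ℕ) :
    ‖z ^ j / (j : 𝕜) ^ a‖ ≤ ‖z‖ ^ j := by
  rw [norm_div, norm_pow, norm_pow, RCLike.norm_natCast]
  exact div_le_self (by positivity) (one_le_pow₀ (by exact_mod_cast hj))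

theorem norm_prod_pow_div_natCast_pow_le (m : ι → ℕ) (x : ι → 𝕜) (s : Finset ι) {k : ι → ℕ}
    (hk : ∀ i, 0 < k i) {r : ℝ} (hr0 : 0 ≤ r) (hr1 : r ≤ 1) (hx : ∀ i, ‖x i‖ ≤ r) :
    ‖∏ i ∈ s, x i ^ k i / (k i : 𝕜) ^ m i‖ ≤ ∏ i ∈ s, (k i : ℝ) * r ^ (k i - 1) := by
  rw [norm_prod]
  refine prod_le_prod (fun _ _ => norm_nonneg _) fun i _ => ?_
  calc ‖x i ^ k i / (k i : 𝕜) ^ m i‖ ≤ ‖x i‖ ^ k i := norm_pow_div_natCast_pow_le _ (hk i) _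
    _ ≤ r ^ k i := pow_le_pow_left₀ (norm_nonneg _) (hx i) _
    _ ≤ k i * r ^ (k i - 1) := pow_le_natCast_mul_pow_sub_one hr0 hr1 (hk i)

variable [Fintype ι] [DecidableEq ι]

def multiPolylogTerm (m : ι → ℕ) (x : ι → 𝕜) (k : ι → ℕ) : 𝕜 :=
  ∏ i, x i ^ k i / (k i : 𝕜) ^ m i

theorem multiPolylogTerm_update (m : ι → ℕ) (x : ι → 𝕜) (k : ι → ℕ) (t : ι) (a : ℕ) (u : 𝕜) :
    multiPolylogTerm (update m t a) (update x t u) k =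
      u ^ k t / (k t : 𝕜) ^ a * ∏ i ∈ univ.erase t, x i ^ k i / (k i : 𝕜) ^ m i := by
  rw [multiPolylogTerm, ← mul_prod_erase univ _ (mem_univ t), update_self, update_self]
  congr 1
  refine prod_congr rfl fun i hi => ?_
  rw [update_of_ne (ne_of_mem_erase hi), update_of_ne (ne_of_mem_erase hi)]

theorem hasDerivAt_multiPolylogTerm_update (m : ι → ℕ) (x : ι → 𝕜) (k : ι → ℕ) (t : ι) (u : 𝕜) :
    HasDerivAt (fun v => multiPolylogTerm m (update x t v) k)
      (k t * u ^ (k t - 1) / (k t : 𝕜) ^ m t *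
        ∏ i ∈ univ.erase t, x i ^ k i / (k i : 𝕜) ^ m i) u := by
  have h := multiPolylogTerm_update m x k t (m t)
  simp only [update_eq_self] at h
  simp only [h]
  exact ((hasDerivAt_pow _ u).div_const _).mul_const _

theorem norm_deriv_multiPolylogTerm_update_le (m : ι → ℕ) (x : ι → 𝕜) {k : ι → ℕ}
    (hk : ∀ i, 0 < k i) (t : ι) {u : 𝕜} {r : ℝ} (hr0 : 0 ≤ r) (hr1 : r ≤ 1)
    (hx : ∀ i, ‖x i‖ ≤ r) (hu : ‖u‖ ≤ r) :
    ‖k t * u ^ (k t - 1) / (k t : 𝕜) ^ m t * ∏ i ∈ univ.erase t, x i ^ k i / (k i : 𝕜) ^ m i‖ ≤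
      ∏ i, (k i : ℝ) * r ^ (k i - 1) := by
  rw [← mul_prod_erase univ _ (mem_univ t), norm_mul]
  refine mul_le_mul ?_ (norm_prod_pow_div_natCast_pow_le m x _ hk hr0 hr1 hx)
    (norm_nonneg _) (by positivity)
  rw [norm_div, norm_mul, norm_pow, norm_pow, RCLike.norm_natCast]
  calc (k t : ℝ) * ‖u‖ ^ (k t - 1) / (k t : ℝ) ^ m t ≤ k t * ‖u‖ ^ (k t - 1) :=
        div_le_self (by positivity) (one_le_pow₀ (by exact_mod_cast hk t))
    _ ≤ k t * r ^ (k t - 1) := by gcongr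

theorem natCast_mul_pow_sub_one_div_pow {z : 𝕜} (hz : z ≠ 0) {j : ℕ} (hj : 0 < j) {a : ℕ}
    (ha : 0 < a) : (j : 𝕜) * z ^ (j - 1) / (j : 𝕜) ^ a = z ^ j / (j : 𝕜) ^ (a - 1) / z := by
  obtain ⟨j, rfl⟩ := Nat.exists_eq_add_one_of_ne_zero hj.ne'
  obtain ⟨a, rfl⟩ := Nat.exists_eq_add_one_of_ne_zero ha.ne'
  have hj' : (j : 𝕜) + 1 ≠ 0 := Nat.cast_add_one_ne_zero j
  simp only [Nat.add_sub_cancel]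
  push_cast
  field_simp
  ring

theorem hasDerivAt_tsum_multiPolylogTerm_update (p : (ι → ℕ) → Prop)
    (hp : ∀ k, p k → ∀ i, 0 < k i) (m : ι → ℕ) (t : ι) (hmt : 0 < m t) (x : ι → 𝕜)
    (hx : ∀ i, ‖x i‖ < 1) (hxt : x t ≠ 0) :
    HasDerivAt (fun u => ∑' k : {k // p k}, multiPolylogTerm m (update x t u) k.1)
      ((∑' k : {k // p k}, multiPolylogTerm (update m t (m t - 1)) x k.1) / x t) (x t) := by
  obtain ⟨r, hr⟩ : ∃ r : ℝ, ∀ i, r ∈ Set.Ioo ‖x i‖ 1 :=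
    (eventually_all.2 fun i => Ioo_mem_nhdsLT (hx i)).exists (f := 𝓝[<] (1 : ℝ))
  have hr0 : 0 ≤ r := (norm_nonneg _).trans (hr t).1.le
  have hr1 : r ≤ 1 := (hr t).2.le
  have hxr : ∀ i, ‖x i‖ ≤ r := fun i => (hr i).1.le
  have hxt_mem : x t ∈ Metric.ball (0 : 𝕜) r := mem_ball_zero_iff.2 (hr t).1
  have hbound : Summable fun k : {k // p k} => ∏ i, (k.1 i : ℝ) * r ^ (k.1 i - 1) :=
    (summable_pi_prod_of_nonneg (fun _ _ => by positivity) fun _ =>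
      summable_natCast_mul_pow_sub_one ((Real.norm_of_nonneg hr0).trans_lt (hr t).2)
      ).comp_injective Subtype.val_injective
  have hsum : Summable fun k : {k // p k} => multiPolylogTerm m (update x t (x t)) k.1 := by
    refine hbound.of_norm_bounded fun k => ?_
    rw [update_eq_self]
    exact norm_prod_pow_div_natCast_pow_le m x univ (hp k k.2) hr0 hr1 hxr
  refine (hasDerivAt_tsum_of_isPreconnected hbound Metric.isOpen_ball
    (convex_ball 0 r).isPreconnected (fun k u _ => hasDerivAt_multiPolylogTerm_update m x k.1 t u)
    (fun k u hu => norm_deriv_multiPolylogTerm_update_le m x (hp k k.2) t hr0 hr1 hxr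
      (mem_ball_zero_iff.1 hu).le) hxt_mem hsum hxt_mem).congr_deriv ?_
  rw [← tsum_div_const]
  refine tsum_congr fun k => ?_
  have h := multiPolylogTerm_update m x k.1 t (m t - 1) (x t)
  rw [update_eq_self] at h
  rw [h, natCast_mul_pow_sub_one_div_pow hxt (hp k k.2 t) hmt, div_mul_eq_mul_div]

theorem multiPolylog_hasDerivAt_of_two_le_general (n : ℕ) (m : Fin n → ℕ)
    (t : Fin n) (ht : 2 ≤ m t) (x : Fin n → ℂ) (hx : ∀ i, ‖x i‖ < 1) (hxt : x t ≠ 0) :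
    HasDerivAt (fun u : ℂ => multiPolylog n m (Function.update x t u))
      (multiPolylog n (Function.update m t (m t - 1)) x / x t) (x t) :=
  hasDerivAt_tsum_multiPolylogTerm_update (fun k => StrictMono k ∧ ∀ i, 0 < k i)
    (fun _ hk => hk.2) m t (by omega) x hx hxt

/-- If `m_t ≥ 2` and `(x₁,…,xₙ)` lies in the open unit polydisc with `x_t ≠ 0`,
then `u ↦ Li_{m₁,…,mₙ}(x₁,…,x_{t-1},u,x_{t+1},…,xₙ)` is complex differentiable at `u = x_t`
with derivative `Li_{m₁,…,m_t−1,…,mₙ}(x₁,…,xₙ)/x_t`. -/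
theorem multiPolylog_hasDerivAt_of_two_le (n : ℕ) (m : Fin n → ℕ) (hm : ∀ i, 0 < m i)
    (t : Fin n) (ht : 2 ≤ m t) (x : Fin n → ℂ) (hx : ∀ i, ‖x i‖ < 1) (hxt : x t ≠ 0) :
    HasDerivAt (fun u : ℂ => multiPolylog n m (Function.update x t u))
      (multiPolylog n (Function.update m t (m t - 1)) x / x t) (x t) :=
  multiPolylog_hasDerivAt_of_two_le_general n m t ht x hx hxt
end

section
/- Let n ≥ 2, let m_1,…,m_n be positive integers with m_n = 1, and let (x_1,…,x_n) lie in the open unit polydisc. Then the function u ↦ Li_{m_1,…,m_n}(x_1,…,x_{n-1},u) is complex differentiable at u = x_n with derivative Li_{m_1,…,m_{n-1}}(x_1,…,x_{n-2}, x_{n-1} x_n)/(1 − x_n). -/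
lemma summable_pi_geom (N : ℕ) (a : Fin N → ℝ) (ha0 : ∀ i, 0 ≤ a i) (ha1 : ∀ i, a i < 1) :
    Summable (fun k : Fin N → ℕ => ∏ i, a i ^ k i) := by
  induction N with
  | zero =>
    simp only [Finset.univ_eq_empty, Finset.prod_empty]
    exact .of_finite
  | succ N ih =>
    have h1 : Summable (fun p : ℕ × (Fin N → ℕ) =>
        a 0 ^ p.1 * ∏ i, a i.succ ^ p.2 i) := by
      apply Summable.mul_of_nonneg (f := fun k : ℕ => a 0 ^ k)
        (g := fun k : Fin N → ℕ => ∏ i, a i.succ ^ k i)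
      · exact summable_geometric_of_lt_one (ha0 0) (ha1 0)
      · exact ih (fun i => a i.succ) (fun i => ha0 i.succ) (fun i => ha1 i.succ)
      · exact fun p => pow_nonneg (ha0 0) _
      · exact fun p => Finset.prod_nonneg fun i _ => pow_nonneg (ha0 _) _
    rw [← (Fin.consEquiv (fun _ : Fin (N+1) => ℕ)).summable_iff]
    convert h1 using 1
    ext p
    simp [Fin.consEquiv, Function.comp, Fin.prod_univ_succ]

/-- the equivalence appending a last entry `j (last) + r + 1` to a strictly increasing
positive tuple. -/
def incEquiv (p : ℕ) :
    ({j : Fin (p + 1) → ℕ // StrictMono j ∧ ∀ i, 0 < j i} × ℕ) ≃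
      {k : Fin (p + 2) → ℕ // StrictMono k ∧ ∀ i, 0 < k i} where
  toFun q := ⟨Fin.snoc q.1.1 (q.1.1 (Fin.last p) + q.2 + 1), by
    obtain ⟨⟨j, hj, hj0⟩, r⟩ := q
    constructor
    · rw [Fin.strictMono_iff_lt_succ]
      intro i
      refine Fin.lastCases ?_ (fun i => ?_) i
      · rw [Fin.succ_last]
        simp only [Fin.snoc_castSucc, Fin.snoc_last]
        omega
      · rw [Fin.succ_castSucc]
        simp only [Fin.snoc_castSucc]
        exact hj (Fin.castSucc_lt_succ (i := i))
    · intro i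
      refine Fin.lastCases ?_ (fun i => ?_) i
      · simp only [Fin.snoc_last]; omega
      · simp only [Fin.snoc_castSucc]; exact hj0 i⟩
  invFun k := (⟨k.1 ∘ Fin.castSucc, (k.2.1.comp Fin.strictMono_castSucc),
      fun i => k.2.2 _⟩, k.1 (Fin.last (p + 1)) - k.1 ((Fin.last p).castSucc) - 1)
  left_inv q := by
    obtain ⟨⟨j, hj, hj0⟩, r⟩ := q
    ext i
    · simp [Fin.snoc_castSucc]
    · simp [Fin.snoc_last, Fin.snoc_castSucc]
      omega
  right_inv k := by
    obtain ⟨k, hk, hk0⟩ := k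
    have hlt : k ((Fin.last p).castSucc) < k (Fin.last (p + 1)) :=
      hk (Fin.castSucc_lt_last _)
    ext i
    refine Fin.lastCases ?_ (fun i => ?_) i
    · simp only [Fin.snoc_last, Function.comp_apply]
      omega
    · simp [Fin.snoc_castSucc]

/-- differentiation of the multiple polylogarithm (of `n+1 ≥ 2` variables) in
its last variable when the last exponent is `1`: the derivative at `x_n` is
`Li_{m₁,…,m_{n-1}}(x₁,…,x_{n-2},x_{n-1}·x_n)/(1 − x_n)`. -/
theorem multiPolylog_hasDerivAt_last (n : ℕ) (hn : 1 ≤ n) (m : Fin (n + 1) → ℕ)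
    (hm : ∀ i, 0 < m i) (hmn : m (Fin.last n) = 1)
    (x : Fin (n + 1) → ℂ) (hx : ∀ i, ‖x i‖ < 1) :
    HasDerivAt (fun u : ℂ => multiPolylog (n + 1) m (Function.update x (Fin.last n) u))
      (multiPolylog n (m ∘ Fin.castSucc)
          (fun i : Fin n => if (i : ℕ) + 1 = n
            then x i.castSucc * x (Fin.last n) else x i.castSucc)
        / (1 - x (Fin.last n)))
      (x (Fin.last n)) := by
  obtain ⟨p, rfl⟩ : ∃ p, n = p + 1 := ⟨n - 1, by omega⟩
  set L : Fin (p + 2) := Fin.last (p + 1) with hL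
  set X : ℂ := x L with hXdef
  have hX : ‖X‖ < 1 := hx L
  set r : ℝ := (1 + ‖X‖) / 2 with hrdef
  have hXr : ‖X‖ < r := by rw [hrdef]; linarith
  have hr1 : r < 1 := by rw [hrdef]; linarith
  have hr0 : 0 < r := lt_of_le_of_lt (norm_nonneg X) hXr
  set S := {k : Fin (p + 2) → ℕ // StrictMono k ∧ ∀ i, 0 < k i} with hS
  set C : S → ℂ := fun k =>
    ∏ i : Fin (p + 1), x i.castSucc ^ k.1 i.castSucc / (k.1 i.castSucc : ℂ) ^ m i.castSucc
    with hC
  set K : S → ℕ := fun k => k.1 L with hK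
  set g : S → ℂ → ℂ := fun k u => C k * (u ^ K k / (K k : ℂ)) with hg
  set g' : S → ℂ → ℂ := fun k u => C k * u ^ (K k - 1) with hg'
  have hfun : ∀ u : ℂ, multiPolylog (p + 1 + 1) m (Function.update x L u) = ∑' k : S, g k u := by
    intro u
    unfold multiPolylog
    apply tsum_congr
    intro k
    rw [Fin.prod_univ_castSucc]
    have h1 : ∀ i : Fin (p + 1), Function.update x L u i.castSucc = x i.castSucc := by
      intro i
      exact Function.update_of_ne (Fin.castSucc_lt_last i).ne _ _
    have h2 : Function.update x L u L = u := Function.update_self _ _ _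
    rw [h2]
    simp only [← hL, hmn, pow_one]
    rw [hg, hC, hK]
    rw [Finset.prod_congr rfl (fun i _ => by rw [h1 i])]
  have hKpos : ∀ k : S, 0 < K k := fun k => k.2.2 L
  have hderiv : ∀ (k : S), ∀ u ∈ Metric.ball (0 : ℂ) r, HasDerivAt (g k) (g' k u) u := by
    intro k u _
    have hKne : ((K k : ℂ)) ≠ 0 := Nat.cast_ne_zero.mpr (hKpos k).ne'
    have h1 : HasDerivAt (fun u : ℂ => u ^ K k / (K k : ℂ)) (u ^ (K k - 1)) u := by
      have h := (hasDerivAt_pow (K k) u).div_const ((K k : ℂ))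
      exact h.congr_deriv (by field_simp)
    exact h1.const_mul (C k)
  set a : Fin (p + 2) → ℝ := fun i => if i = L then r else ‖x i‖ with ha
  have ha0 : ∀ i, 0 ≤ a i := by
    intro i; rw [ha]; dsimp only; split
    · exact hr0.le
    · exact norm_nonneg _
  have ha1 : ∀ i, a i < 1 := by
    intro i; rw [ha]; dsimp only; split
    · exact hr1
    · exact hx i
  set w : S → ℝ := fun k => r⁻¹ * ∏ i, a i ^ k.1 i with hwdef
  have hXball : X ∈ Metric.ball (0 : ℂ) r := by
    rw [Metric.mem_ball, dist_zero_right]; exact hXr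
  have hbound : ∀ (k : S), ∀ u ∈ Metric.ball (0 : ℂ) r, ‖g' k u‖ ≤ w k := by
    intro k u hu
    rw [Metric.mem_ball, dist_zero_right] at hu
    have hCle : ‖C k‖ ≤ ∏ i : Fin (p + 1), ‖x i.castSucc‖ ^ k.1 i.castSucc := by
      rw [hC, norm_prod]
      apply Finset.prod_le_prod (fun i _ => norm_nonneg _)
      intro i _
      rw [norm_div, norm_pow, norm_pow, Complex.norm_natCast]
      apply div_le_self (pow_nonneg (norm_nonneg _) _)
      exact one_le_pow₀ (Nat.one_le_cast.mpr (k.2.2 i.castSucc))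
    have huK : ‖u‖ ^ (K k - 1) ≤ r ^ (K k - 1) :=
      pow_le_pow_left₀ (norm_nonneg u) hu.le _
    have hwk : w k = (∏ i : Fin (p + 1), ‖x i.castSucc‖ ^ k.1 i.castSucc) * r ^ (K k - 1) := by
      rw [hwdef]
      dsimp only
      rw [Fin.prod_univ_castSucc]
      have e1 : ∀ i : Fin (p + 1), a i.castSucc = ‖x i.castSucc‖ := by
        intro i; rw [ha]; exact if_neg (Fin.castSucc_lt_last i).ne
      have e2 : a L = r := by rw [ha]; exact if_pos rfl
      rw [e2, Finset.prod_congr rfl (fun i _ => by rw [e1 i])]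
      have e3 : r ^ (K k - 1) = r⁻¹ * r ^ K k := by
        rw [pow_sub₀ r hr0.ne' (hKpos k), pow_one]
        ring
      rw [e3, hK]
      ring
    rw [hwk, hg']
    dsimp only
    rw [norm_mul, norm_pow]
    exact mul_le_mul hCle huK (pow_nonneg (norm_nonneg u) _)
      (Finset.prod_nonneg fun i _ => pow_nonneg (norm_nonneg _) _)
  have hwsum : Summable w := by
    rw [hwdef]
    apply Summable.mul_left
    exact (summable_pi_geom (p + 2) a ha0 ha1).comp_injective Subtype.val_injective
  have hg0 : Summable (fun k : S => g k 0) := by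
    have hz : (fun k : S => g k 0) = fun _ => 0 := by
      funext k; rw [hg]; simp [zero_pow (hKpos k).ne']
    rw [hz]; exact summable_zero
  have HD : HasDerivAt (fun z => ∑' k : S, g k z) (∑' k : S, g' k X) X :=
    hasDerivAt_tsum_of_isPreconnected hwsum Metric.isOpen_ball
      (convex_ball (0 : ℂ) r).isPreconnected hderiv hbound (Metric.mem_ball_self hr0)
      hg0 hXball
  have hfun' : (fun u : ℂ => multiPolylog (p + 1 + 1) m (Function.update x L u)) =
      fun z => ∑' k : S, g k z := funext hfun
  rw [hfun']
  convert HD using 1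
  -- final identity
  have hsum' : Summable (fun k : S => g' k X) :=
    Summable.of_norm_bounded hwsum (fun k => hbound k X hXball)
  set e := incEquiv p with he
  set y : Fin (p + 1) → ℂ := fun i =>
    if (i : ℕ) + 1 = p + 1 then x i.castSucc * X else x i.castSucc with hy
  set D : {j : Fin (p + 1) → ℕ // StrictMono j ∧ ∀ i, 0 < j i} → ℂ := fun j =>
    ∏ i : Fin (p + 1), y i ^ j.1 i / (j.1 i : ℂ) ^ m i.castSucc with hD
  have hterm : ∀ q : {j : Fin (p + 1) → ℕ // StrictMono j ∧ ∀ i, 0 < j i} × ℕ,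
      g' (e q) X = D q.1 * X ^ q.2 := by
    rintro ⟨j, t⟩
    have hK' : K (e (j, t)) = j.1 (Fin.last p) + t + 1 := by
      simp [he, incEquiv, hK, Fin.snoc_last, L]
    have hC' : C (e (j, t)) =
        ∏ i : Fin (p + 1), x i.castSucc ^ j.1 i / (j.1 i : ℂ) ^ m i.castSucc := by
      rw [hC]
      apply Finset.prod_congr rfl
      intro i _
      simp [he, incEquiv, Fin.snoc_castSucc]
    have hy1 : ∀ i : Fin p, y i.castSucc = x i.castSucc.castSucc := by
      intro i
      rw [hy]
      dsimp only
      rw [if_neg]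
      have h := i.isLt
      simp only [Fin.coe_castSucc]
      omega
    have hy2 : y (Fin.last p) = x (Fin.last p).castSucc * X := by
      rw [hy]
      exact if_pos rfl
    have hprod : D j =
        (∏ i : Fin p,
          x i.castSucc.castSucc ^ j.1 i.castSucc / (j.1 i.castSucc : ℂ) ^ m i.castSucc.castSucc)
        * ((x (Fin.last p).castSucc * X) ^ j.1 (Fin.last p)
            / (j.1 (Fin.last p) : ℂ) ^ m (Fin.last p).castSucc) := by
      rw [hD]
      dsimp only
      rw [Fin.prod_univ_castSucc]
      congr 1
      · exact Finset.prod_congr rfl fun i _ => by rw [hy1 i]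
      · rw [hy2]
    rw [hg']
    dsimp only
    rw [hC', hK', hprod, Fin.prod_univ_castSucc]
    have hex : j.1 (Fin.last p) + t + 1 - 1 = j.1 (Fin.last p) + t := by omega
    rw [hex, pow_add, mul_pow]
    ring
  have hsum2 : Summable (fun q : {j : Fin (p + 1) → ℕ // StrictMono j ∧ ∀ i, 0 < j i} × ℕ =>
      D q.1 * X ^ q.2) :=
    (e.summable_iff.mpr hsum').congr hterm
  have step1 : (∑' k : S, g' k X) =
      ∑' q : {j : Fin (p + 1) → ℕ // StrictMono j ∧ ∀ i, 0 < j i} × ℕ, D q.1 * X ^ q.2 := by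
    rw [← e.tsum_eq (fun k : S => g' k X)]
    exact tsum_congr hterm
  rw [step1, Summable.tsum_prod' hsum2
    (fun j => (summable_geometric_of_norm_lt_one hX).mul_left (D j))]
  have step2 : ∀ j : {j : Fin (p + 1) → ℕ // StrictMono j ∧ ∀ i, 0 < j i},
      (∑' t : ℕ, D j * X ^ t) = D j * (1 - X)⁻¹ := by
    intro j
    rw [tsum_mul_left, tsum_geometric_of_norm_lt_one hX]
  rw [tsum_congr step2, tsum_mul_right]
  rw [div_eq_mul_inv]
  congr 1
end

section
/- For every integer n ≥ 1 and every real x with 0 < x < 1, the classical polylogarithm satisfies Li_n(x) = Σ_{k≥1} x^k/k^n = ∫_{0 < t_1 < t_2 < ⋯ < t_n < x} (1/(1−t_1)) · (1/t_2) ⋯ (1/t_n) dt_1 ⋯ dt_n, where the right-hand side is the Lebesgue integral over the open simplex {0 < t_1 < ⋯ < t_n < x} ⊂ ℝ^n, and the integrand is integrable on this simplex. -/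
open MeasureTheory Set

noncomputable section PolylogAux

/-- The open simplex. -/
def Smp (n : ℕ) (x : ℝ) : Set (Fin n → ℝ) :=
  {t | StrictMono t ∧ ∀ i, t i ∈ Set.Ioo 0 x}

/-- The integrand. -/
def Phi (n : ℕ) (t : Fin (n + 1) → ℝ) : ℝ :=
  (1 - t 0)⁻¹ * ∏ i : Fin n, (t i.succ)⁻¹

lemma isOpen_Smp (n : ℕ) (x : ℝ) : IsOpen (Smp n x) := by
  have h1 : Smp n x = (⋂ p : Fin n × Fin n, {t : Fin n → ℝ | p.1 < p.2 → t p.1 < t p.2}) ∩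
      ⋂ i : Fin n, (fun t : Fin n → ℝ => t i) ⁻¹' Set.Ioo 0 x := by
    ext t
    simp only [Smp, Set.mem_inter_iff, Set.mem_iInter, Set.mem_setOf_eq, Set.mem_preimage]
    constructor
    · rintro ⟨h1, h2⟩; exact ⟨fun p hp => h1 hp, h2⟩
    · rintro ⟨h1, h2⟩; exact ⟨fun i j hij => h1 (i, j) hij, h2⟩
  rw [h1]
  refine IsOpen.inter (isOpen_iInter_of_finite fun p => ?_)
    (isOpen_iInter_of_finite fun i => (isOpen_Ioo).preimage (continuous_apply i))
  by_cases hp : p.1 < p.2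
  · have : {t : Fin n → ℝ | p.1 < p.2 → t p.1 < t p.2} = {t | t p.1 < t p.2} := by
      ext t; simp [hp]
    rw [this]
    exact isOpen_lt (continuous_apply p.1) (continuous_apply p.2)
  · have : {t : Fin n → ℝ | p.1 < p.2 → t p.1 < t p.2} = Set.univ := by
      ext t; simp [hp]
    rw [this]; exact isOpen_univ

lemma measurable_Phi (n : ℕ) : Measurable (Phi n) := by
  apply Measurable.mul
  · exact (measurable_const.sub (measurable_pi_apply 0)).inv
  · exact Finset.measurable_prod _ fun i _ => (measurable_pi_apply i.succ).inv

lemma Phi_nonneg {n : ℕ} {x : ℝ} (hx : x ≤ 1) {t : Fin (n + 1) → ℝ} (ht : t ∈ Smp (n + 1) x) :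
    0 ≤ Phi n t := by
  obtain ⟨-, h2⟩ := ht
  apply mul_nonneg
  · have h := (h2 0).2
    exact inv_nonneg.2 (by linarith)
  · exact Finset.prod_nonneg fun i _ => inv_nonneg.2 (h2 i.succ).1.le

lemma summable_aux (m : ℕ) {x : ℝ} (h0 : 0 ≤ x) (h1 : x < 1) :
    Summable (fun k : ℕ => x ^ k / ((k : ℝ) + 1) ^ m) := by
  apply Summable.of_nonneg_of_le (fun k => by positivity) (fun k => ?_)
    (summable_geometric_of_lt_one h0 h1)
  have hk : (1 : ℝ) ≤ ((k : ℝ) + 1) ^ m := one_le_pow₀ (by linarith [Nat.cast_nonneg (α := ℝ) k])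
  exact div_le_self (pow_nonneg h0 k) hk

lemma summable_aux' (m : ℕ) {x : ℝ} (h0 : 0 ≤ x) (h1 : x < 1) :
    Summable (fun k : ℕ => x ^ (k + 1) / ((k : ℝ) + 1) ^ m) := by
  have := (summable_aux m h0 h1).mul_left x
  simpa [mul_div_assoc, pow_succ, mul_comm, mul_left_comm] using this

/-- Key single-variable integration lemma. -/
lemma key_lintegral (m : ℕ) {x : ℝ} (hx0 : 0 < x) (hx1 : x < 1) :
    ∫⁻ s in Set.Ioo (0:ℝ) x, ENNReal.ofReal (∑' k : ℕ, s ^ k / ((k : ℝ) + 1) ^ m) =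
      ENNReal.ofReal (∑' k : ℕ, x ^ (k + 1) / ((k : ℝ) + 1) ^ (m + 1)) := by
  have hmeas : MeasurableSet (Set.Ioo (0:ℝ) x) := measurableSet_Ioo
  -- step 1: pull ofReal inside tsum, pointwise on the set
  have step1 : ∫⁻ s in Set.Ioo (0:ℝ) x, ENNReal.ofReal (∑' k : ℕ, s ^ k / ((k : ℝ) + 1) ^ m) =
      ∫⁻ s in Set.Ioo (0:ℝ) x, ∑' k : ℕ, ENNReal.ofReal (s ^ k / ((k : ℝ) + 1) ^ m) := by
    apply setLIntegral_congr_fun hmeas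
    intro s hs
    exact ENNReal.ofReal_tsum_of_nonneg (fun k => div_nonneg (pow_nonneg hs.1.le k) (by positivity))
      (summable_aux m hs.1.le (hs.2.trans hx1))
  rw [step1, lintegral_tsum (f := fun (k : ℕ) (s : ℝ) => ENNReal.ofReal (s ^ k / ((k : ℝ) + 1) ^ m))
    (fun k => ((by fun_prop :
      Measurable fun s : ℝ => ENNReal.ofReal (s ^ k / ((k : ℝ) + 1) ^ m))).aemeasurable)]
  have step2 : ∀ k : ℕ, ∫⁻ s in Set.Ioo (0:ℝ) x, ENNReal.ofReal (s ^ k / ((k : ℝ) + 1) ^ m) =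
      ENNReal.ofReal (x ^ (k + 1) / ((k : ℝ) + 1) ^ (m + 1)) := by
    intro k
    have hint : IntegrableOn (fun s : ℝ => s ^ k / ((k : ℝ) + 1) ^ m) (Set.Ioo 0 x) := by
      apply (((continuous_pow k).div_const _).continuousOn.integrableOn_compact
        (isCompact_Icc (a := (0:ℝ)) (b := x))).mono_set Set.Ioo_subset_Icc_self
    rw [← ofReal_integral_eq_lintegral_ofReal hint]
    · congr 1
      rw [← MeasureTheory.integral_Ioc_eq_integral_Ioo,
        ← intervalIntegral.integral_of_le hx0.le]
      rw [intervalIntegral.integral_div, integral_pow]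
      simp only [zero_pow (Nat.succ_ne_zero k), sub_zero]
      rw [div_div, pow_succ]
      ring_nf
    · filter_upwards [ae_restrict_mem hmeas] with s hs
      have := hs.1
      positivity
  simp_rw [step2]
  rw [← ENNReal.ofReal_tsum_of_nonneg (fun k => by positivity) (summable_aux' (m+1) hx0.le hx1)]

lemma strictMono_snoc_iff {n : ℕ} (u : Fin n → ℝ) (s : ℝ) :
    StrictMono (Fin.snoc u s : Fin (n + 1) → ℝ) ↔ StrictMono u ∧ ∀ j, u j < s := by
  constructor
  · intro h
    constructor
    · intro i j hij
      have := h (show (i.castSucc : Fin (n+1)) < j.castSucc by simpa using hij)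
      simpa using this
    · intro j
      have := h (show (j.castSucc : Fin (n+1)) < Fin.last n from Fin.castSucc_lt_last j)
      simpa using this
  · rintro ⟨h1, h2⟩
    intro i j hij
    rcases Fin.eq_castSucc_or_eq_last j with ⟨j', rfl⟩ | rfl
    · rcases Fin.eq_castSucc_or_eq_last i with ⟨i', rfl⟩ | rfl
      · simp only [Fin.snoc_castSucc]
        exact h1 (by simpa using hij)
      · exact absurd hij (not_lt.2 (Fin.le_last _))
    · rcases Fin.eq_castSucc_or_eq_last i with ⟨i', rfl⟩ | rfl
      · simp only [Fin.snoc_castSucc, Fin.snoc_last]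
        exact h2 i'
      · exact absurd hij (lt_irrefl _)

lemma mem_Smp_snoc {n : ℕ} {x : ℝ} (s : ℝ) (u : Fin (n + 1) → ℝ) :
    (Fin.snoc u s : Fin (n + 2) → ℝ) ∈ Smp (n + 2) x ↔ s ∈ Set.Ioo 0 x ∧ u ∈ Smp (n + 1) s := by
  constructor
  · rintro ⟨h1, h2⟩
    have hs : s ∈ Set.Ioo 0 x := by
      have := h2 (Fin.last (n + 1))
      simpa using this
    refine ⟨hs, (strictMono_snoc_iff u s |>.1 h1).1, fun j => ?_⟩
    have hj1 : 0 < u j := by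
      have := (h2 j.castSucc).1
      simpa using this
    exact ⟨hj1, (strictMono_snoc_iff u s |>.1 h1).2 j⟩
  · rintro ⟨hs, h1, h2⟩
    refine ⟨(strictMono_snoc_iff u s).2 ⟨h1, fun j => (h2 j).2⟩, fun i => ?_⟩
    rcases Fin.eq_castSucc_or_eq_last i with ⟨i', rfl⟩ | rfl
    · simp only [Fin.snoc_castSucc]
      exact ⟨(h2 i').1, (h2 i').2.trans hs.2⟩
    · simpa using hs

lemma Phi_snoc {n : ℕ} (u : Fin (n + 1) → ℝ) (s : ℝ) :
    Phi (n + 1) (Fin.snoc u s : Fin (n + 2) → ℝ) = Phi n u * s⁻¹ := by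
  unfold Phi
  have h0 : (Fin.snoc u s : Fin (n + 2) → ℝ) 0 = u 0 := by
    rw [show (0 : Fin (n + 2)) = Fin.castSucc 0 from rfl, Fin.snoc_castSucc]
  rw [Fin.prod_univ_castSucc]
  simp only [h0, Fin.snoc_castSucc, Fin.succ_castSucc, Fin.succ_last, Fin.snoc_last]
  ring

end PolylogAux

noncomputable section PolylogMain
open scoped ENNReal

lemma G_succ (n : ℕ) {x : ℝ} (hx0 : 0 < x) (hx1 : x < 1) :
    ∫⁻ t in Smp (n + 2) x, ENNReal.ofReal (Phi (n + 1) t) =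
      ∫⁻ s in Set.Ioo (0:ℝ) x,
        ENNReal.ofReal s⁻¹ * ∫⁻ u in Smp (n + 1) s, ENNReal.ofReal (Phi n u) := by
  have hS : MeasurableSet (Smp (n + 2) x) := (isOpen_Smp _ _).measurableSet
  set H : (Fin (n + 2) → ℝ) → ℝ≥0∞ :=
    (Smp (n + 2) x).indicator (fun t => ENNReal.ofReal (Phi (n + 1) t)) with hH
  have hHm : Measurable H := ((measurable_Phi (n + 1)).ennreal_ofReal).indicator hS
  set e := MeasurableEquiv.piFinSuccAbove (fun _ : Fin (n + 2) => ℝ) (Fin.last (n + 1)) with he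
  have hmp := (MeasureTheory.volume_preserving_piFinSuccAbove
      (fun _ : Fin (n + 2) => ℝ) (Fin.last (n + 1))).symm
  have key : ∫⁻ t, H t = ∫⁻ p : ℝ × (Fin (n + 1) → ℝ), H (e.symm p) := by
    rw [← hmp.map_eq, lintegral_map hHm e.symm.measurable]
  rw [← lintegral_indicator hS, ← hH, key]
  have hsymm : ∀ p : ℝ × (Fin (n + 1) → ℝ), e.symm p = Fin.snoc p.2 p.1 := by
    intro p
    simp [he, MeasurableEquiv.piFinSuccAbove_symm_apply, Fin.insertNthEquiv,
      Fin.insertNth_last']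
  have hprod : (volume : Measure (ℝ × (Fin (n + 1) → ℝ))) = volume.prod volume :=
    MeasureTheory.Measure.volume_eq_prod _ _
  rw [hprod, lintegral_prod (f := fun p : ℝ × (Fin (n + 1) → ℝ) => H (e.symm p))
    ((hHm.comp e.symm.measurable).aemeasurable)]
  have inner : ∀ s : ℝ, (∫⁻ u : Fin (n + 1) → ℝ, H (e.symm (s, u))) =
      (Set.Ioo (0:ℝ) x).indicator
        (fun s => ENNReal.ofReal s⁻¹ * ∫⁻ u in Smp (n + 1) s, ENNReal.ofReal (Phi n u)) s := by
    intro s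
    by_cases hs : s ∈ Set.Ioo (0:ℝ) x
    · rw [Set.indicator_of_mem hs]
      have congr1 : ∀ u : Fin (n + 1) → ℝ, H (e.symm (s, u)) =
          ENNReal.ofReal s⁻¹ *
            (Smp (n + 1) s).indicator (fun u => ENNReal.ofReal (Phi n u)) u := by
        intro u
        rw [hsymm, hH]
        by_cases hu : u ∈ Smp (n + 1) s
        · rw [Set.indicator_of_mem ((mem_Smp_snoc s u).2 ⟨hs, hu⟩), Set.indicator_of_mem hu,
            Phi_snoc, ENNReal.ofReal_mul (Phi_nonneg (le_of_lt (hs.2.trans hx1)) hu), mul_comm]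
        · rw [Set.indicator_of_notMem, Set.indicator_of_notMem hu, mul_zero]
          intro h
          exact hu ((mem_Smp_snoc s u).1 h).2
      rw [lintegral_congr congr1,
        lintegral_const_mul' _ _ ENNReal.ofReal_ne_top,
        lintegral_indicator (isOpen_Smp _ _).measurableSet]
    · rw [Set.indicator_of_notMem hs]
      have congr2 : ∀ u : Fin (n + 1) → ℝ, H (e.symm (s, u)) = 0 := by
        intro u
        rw [hsymm, hH]
        apply Set.indicator_of_notMem
        intro h
        exact hs ((mem_Smp_snoc s u).1 h).1
      rw [lintegral_congr congr2, lintegral_zero]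
  simp_rw [inner]
  rw [lintegral_indicator measurableSet_Ioo]

lemma G_eq (n : ℕ) : ∀ x : ℝ, 0 < x → x < 1 →
    ∫⁻ t in Smp (n + 1) x, ENNReal.ofReal (Phi n t) =
      ENNReal.ofReal (∑' k : ℕ, x ^ (k + 1) / ((k : ℝ) + 1) ^ (n + 1)) := by
  induction n with
  | zero =>
    intro x hx0 hx1
    have hS : MeasurableSet (Smp 1 x) := (isOpen_Smp _ _).measurableSet
    set H : (Fin 1 → ℝ) → ℝ≥0∞ :=
      (Smp 1 x).indicator (fun t => ENNReal.ofReal (Phi 0 t)) with hH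
    have hHm : Measurable H := ((measurable_Phi 0).ennreal_ofReal).indicator hS
    set e := MeasurableEquiv.funUnique (Fin 1) ℝ with he
    have hmp := (MeasureTheory.volume_preserving_funUnique (Fin 1) ℝ).symm
    have key : ∫⁻ t, H t = ∫⁻ s : ℝ, H (e.symm s) := by
      exact (hmp.lintegral_comp hHm).symm
    rw [← lintegral_indicator hS, ← hH, key]
    have hpt : ∀ s : ℝ, H (e.symm s) =
        (Set.Ioo (0:ℝ) x).indicator (fun s => ENNReal.ofReal (1 - s)⁻¹) s := by
      intro s
      have hesymm : e.symm s = fun _ : Fin 1 => s := rfl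
      have hmem : (fun _ : Fin 1 => s) ∈ Smp 1 x ↔ s ∈ Set.Ioo 0 x := by
        constructor
        · intro h; exact h.2 0
        · intro h
          exact ⟨fun i j hij => absurd (Subsingleton.elim i j) hij.ne, fun i => h⟩
      have hphi : Phi 0 (fun _ : Fin 1 => s) = (1 - s)⁻¹ := by
        simp [Phi]
      rw [hH, hesymm]
      by_cases hs : s ∈ Set.Ioo (0:ℝ) x
      · rw [Set.indicator_of_mem (hmem.2 hs), Set.indicator_of_mem hs, hphi]
      · rw [Set.indicator_of_notMem (fun h => hs (hmem.1 h)), Set.indicator_of_notMem hs]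
    simp_rw [hpt]
    rw [lintegral_indicator measurableSet_Ioo]
    rw [← key_lintegral 0 hx0 hx1]
    apply setLIntegral_congr_fun measurableSet_Ioo
    intro s hs
    beta_reduce
    congr 1
    simp only [pow_zero, div_one]
    rw [tsum_geometric_of_lt_one hs.1.le (hs.2.trans hx1)]
  | succ n ih =>
    intro x hx0 hx1
    rw [G_succ n hx0 hx1]
    have congr1 : ∀ s ∈ Set.Ioo (0:ℝ) x,
        ENNReal.ofReal s⁻¹ * (∫⁻ u in Smp (n + 1) s, ENNReal.ofReal (Phi n u)) =
          ENNReal.ofReal (∑' k : ℕ, s ^ k / ((k : ℝ) + 1) ^ (n + 1)) := by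
      intro s hs
      rw [ih s hs.1 (hs.2.trans hx1), ← ENNReal.ofReal_mul (inv_nonneg.2 hs.1.le)]
      congr 1
      rw [← tsum_mul_left]
      congr 1
      funext k
      have hs0 : s ≠ 0 := ne_of_gt hs.1
      rw [pow_succ', ← mul_div_assoc, ← mul_assoc, inv_mul_cancel₀ hs0, one_mul]
    rw [setLIntegral_congr_fun measurableSet_Ioo (fun s hs => congr1 s hs),
      key_lintegral (n + 1) hx0 hx1]

lemma tsum_pnat_eq (m : ℕ) (x : ℝ) :
    ∑' k : ℕ+, x ^ (k : ℕ) / (k : ℝ) ^ m = ∑' k : ℕ, x ^ (k + 1) / ((k : ℝ) + 1) ^ m := by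
  rw [← Equiv.tsum_eq Equiv.pnatEquivNat.symm (fun k : ℕ+ => x ^ (k : ℕ) / (k : ℝ) ^ m)]
  congr 1
  funext k
  have h1 : ((Equiv.pnatEquivNat.symm k : ℕ+) : ℕ) = k + 1 := by
    simp [Equiv.pnatEquivNat, Nat.succPNat]
  rw [h1]
  push_cast
  ring_nf

end PolylogMain

/-- for every integer `n ≥ 1` (here `n+1` with `n : ℕ`) and real `0 < x < 1`,
the classical polylogarithm `Li_{n+1}(x) = ∑_{k≥1} x^k/k^{n+1}` equals the Lebesgue integral
of `(1/(1−t₁))·(1/t₂)⋯(1/t_{n+1})` over the open simplex `0 < t₁ < ⋯ < t_{n+1} < x`,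
and the integrand is integrable there. -/
theorem polylog_eq_simplex_integral (n : ℕ) (x : ℝ) (hx0 : 0 < x) (hx1 : x < 1) :
    IntegrableOn (fun t : Fin (n + 1) → ℝ => (1 - t 0)⁻¹ * ∏ i : Fin n, (t i.succ)⁻¹)
      {t : Fin (n + 1) → ℝ | StrictMono t ∧ ∀ i, t i ∈ Set.Ioo 0 x} ∧
    ∑' k : ℕ+, x ^ (k : ℕ) / (k : ℝ) ^ (n + 1) =
      ∫ t in {t : Fin (n + 1) → ℝ | StrictMono t ∧ ∀ i, t i ∈ Set.Ioo 0 x},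
        (1 - t 0)⁻¹ * ∏ i : Fin n, (t i.succ)⁻¹ := by
  have hset : {t : Fin (n + 1) → ℝ | StrictMono t ∧ ∀ i, t i ∈ Set.Ioo 0 x} = Smp (n + 1) x := rfl
  have hfun : (fun t : Fin (n + 1) → ℝ => (1 - t 0)⁻¹ * ∏ i : Fin n, (t i.succ)⁻¹) = Phi n := rfl
  rw [hset, hfun]
  have hS : MeasurableSet (Smp (n + 1) x) := (isOpen_Smp _ _).measurableSet
  have hG := G_eq n x hx0 hx1
  have hnn : 0 ≤ᵐ[volume.restrict (Smp (n + 1) x)] Phi n := by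
    filter_upwards [ae_restrict_mem hS] with t ht
    exact Phi_nonneg hx1.le ht
  have hsum_nn : 0 ≤ ∑' k : ℕ, x ^ (k + 1) / ((k : ℝ) + 1) ^ (n + 1) :=
    tsum_nonneg fun k => by positivity
  have hint : IntegrableOn (Phi n) (Smp (n + 1) x) := by
    refine ⟨(measurable_Phi n).aestronglyMeasurable, ?_⟩
    rw [hasFiniteIntegral_iff_ofReal hnn]
    rw [show (∫⁻ a, ENNReal.ofReal (Phi n a) ∂volume.restrict (Smp (n + 1) x)) =
      ∫⁻ t in Smp (n + 1) x, ENNReal.ofReal (Phi n t) from rfl, hG]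
    exact ENNReal.ofReal_lt_top
  refine ⟨hint, ?_⟩
  rw [integral_eq_lintegral_of_nonneg_ae hnn (measurable_Phi n).aestronglyMeasurable]
  rw [show (∫⁻ a, ENNReal.ofReal (Phi n a) ∂volume.restrict (Smp (n + 1) x)) =
      ∫⁻ t in Smp (n + 1) x, ENNReal.ofReal (Phi n t) from rfl, hG,
    ENNReal.toReal_ofReal hsum_nn, tsum_pnat_eq]
end

section
/- Let m_1,…,m_n be positive integers, K = m_1 + ⋯ + m_n, and let x_1,…,x_n be real numbers with 0 < x_i < 1 for all i. Set a_i = 1/(x_i x_{i+1} ⋯ x_n) for 1 ≤ i ≤ n, and let (b_1,…,b_K) be the sequence obtained by concatenating, for i = 1,…,n, the block (a_i, 0, 0, …, 0) consisting of a_i followed by m_i − 1 zeros. Then the function (t_1,…,t_K) ↦ ∏_{j=1}^K 1/(t_j − b_j) is integrable on the open simplex {0 < t_1 < t_2 < ⋯ < t_K < 1} ⊂ ℝ^K and Li_{m_1,…,m_n}(x_1,…,x_n) = (−1)^n ∫_{0 < t_1 < ⋯ < t_K < 1} ∏_{j=1}^K 1/(t_j − b_j) dt_1 ⋯ dt_K.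 -/
open MeasureTheory

open Finset
open scoped ENNReal

lemma lintegral_pow_Ioo (c : ℕ) (hc : 1 ≤ c) {u : ℝ} (hu : 0 < u) :
    ∫⁻ s in Set.Ioo (0:ℝ) u, ENNReal.ofReal (s ^ (c - 1)) =
      ENNReal.ofReal u ^ c * (c : ℝ≥0∞)⁻¹ := by
  have hint : IntegrableOn (fun s : ℝ => s ^ (c - 1)) (Set.Ioo 0 u) :=
    ((continuous_pow (c-1)).integrableOn_Ioc).mono_set Set.Ioo_subset_Ioc_self
  have hnn : 0 ≤ᶠ[ae (volume.restrict (Set.Ioo (0:ℝ) u))] fun s : ℝ => s ^ (c-1) :=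
    (ae_restrict_iff' measurableSet_Ioo).2 (ae_of_all _ fun s hs => pow_nonneg hs.1.le _)
  rw [← ofReal_integral_eq_lintegral_ofReal hint hnn]
  have h1 : ∫ s in Set.Ioo (0:ℝ) u, s ^ (c-1) = u ^ c / c := by
    rw [← MeasureTheory.integral_Ioc_eq_integral_Ioo, ← intervalIntegral.integral_of_le hu.le,
      integral_pow]
    have h2 : c - 1 + 1 = c := by omega
    rw [h2, zero_pow (by omega), sub_zero]
    rw [Nat.cast_sub hc]
    push_cast
    ring_nf
  rw [h1, ENNReal.ofReal_div_of_pos (by exact_mod_cast hc), ENNReal.ofReal_pow hu.le,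
    ENNReal.ofReal_natCast, div_eq_mul_inv]

lemma prod_tsum_ennreal : ∀ (n : ℕ) (h : Fin n → ℕ → ℝ≥0∞),
    ∏ i, ∑' k, h i k = ∑' k : Fin n → ℕ, ∏ i, h i (k i) := by
  intro n
  induction n with
  | zero => intro h; simp [tsum_fintype]
  | succ n ih =>
    intro h
    rw [Fin.prod_univ_succ, ih, ← (Fin.consEquiv (fun _ : Fin (n+1) => ℕ)).tsum_eq,
      ENNReal.tsum_prod']
    simp only [Fin.consEquiv_apply, Fin.prod_univ_succ, Fin.cons_zero, Fin.cons_succ,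
      ENNReal.tsum_mul_left]
    rw [ENNReal.tsum_mul_right]

lemma block_prod {α : Type*} [CommMonoid α] (M : ℕ → ℕ) (g : ℕ → α) :
    ∀ n : ℕ, ∏ r ∈ range (∑ l ∈ range n, M l), g r
      = ∏ i ∈ range n, ∏ s ∈ range (M i), g (∑ l ∈ range i, M l + s) := by
  intro n
  induction n with
  | zero => simp
  | succ n ih =>
    rw [Finset.sum_range_succ, Finset.prod_range_add, ih, Finset.prod_range_succ]

lemma sum_Iio_fin {A : Type*} [AddCommMonoid A] {n : ℕ} (f : Fin n → A) (g : ℕ → A)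
    (hg : ∀ l : Fin n, g ↑l = f l) (i : Fin n) :
    ∑ l ∈ Finset.Iio i, f l = ∑ l ∈ range ↑i, g l := by
  apply Finset.sum_nbij' (fun (l : Fin n) => (l : ℕ))
    (fun l => (⟨min l ↑i, lt_of_le_of_lt (min_le_right _ _) i.2⟩ : Fin n))
  · intro l hl; exact Finset.mem_range.mpr (Fin.lt_def.mp (Finset.mem_Iio.mp hl))
  · intro l hl
    have := Finset.mem_range.mp hl
    exact Finset.mem_Iio.mpr (by rw [Fin.lt_def]; show min l ↑i < ↑i; omega)
  · intro l hl
    have := Fin.lt_def.mp (Finset.mem_Iio.mp hl)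
    exact Fin.ext (by show min (l:ℕ) ↑i = ↑l; omega)
  · intro l hl; have := Finset.mem_range.mp hl; show min l (i:ℕ) = l; omega
  · intro l _; exact (hg l).symm

lemma sum_Iic_fin {A : Type*} [AddCommMonoid A] {n : ℕ} (f : Fin n → A) (g : ℕ → A)
    (hg : ∀ l : Fin n, g ↑l = f l) (i : Fin n) :
    ∑ l ∈ Finset.Iic i, f l = ∑ l ∈ range (↑i + 1), g l := by
  apply Finset.sum_nbij' (fun (l : Fin n) => (l : ℕ))
    (fun l => (⟨min l ↑i, lt_of_le_of_lt (min_le_right _ _) i.2⟩ : Fin n))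
  · intro l hl
    exact Finset.mem_range.mpr (by have := Fin.le_def.mp (Finset.mem_Iic.mp hl); omega)
  · intro l hl
    have := Finset.mem_range.mp hl
    exact Finset.mem_Iic.mpr (by rw [Fin.le_def]; show min l ↑i ≤ ↑i; omega)
  · intro l hl
    have := Fin.le_def.mp (Finset.mem_Iic.mp hl)
    exact Fin.ext (by show min (l:ℕ) ↑i = ↑l; omega)
  · intro l hl; have := Finset.mem_range.mp hl; show min l (i:ℕ) = l; omega
  · intro l _; exact (hg l).symm

def simplexSet (K : ℕ) (u : ℝ) : Set (Fin K → ℝ) :=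
  {t | StrictMono t ∧ ∀ j, t j ∈ Set.Ioo (0:ℝ) u}

lemma measurableSet_simplexSet (K : ℕ) (u : ℝ) : MeasurableSet (simplexSet K u) := by
  have h1 : MeasurableSet {t : Fin K → ℝ | StrictMono t} := by
    have he : {t : Fin K → ℝ | StrictMono t}
        = ⋂ (p : Fin K × Fin K) (_ : p.1 < p.2), {t | t p.1 < t p.2} := by
      ext t
      simp only [Set.mem_setOf_eq, Set.mem_iInter]
      exact ⟨fun h p hp => h hp, fun h a b hab => h (a, b) hab⟩
    rw [he]
    exact MeasurableSet.iInter fun p => MeasurableSet.iInter fun _ =>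
      measurableSet_lt (measurable_pi_apply _) (measurable_pi_apply _)
  have h2 : MeasurableSet (⋂ j, {t : Fin K → ℝ | t j ∈ Set.Ioo (0:ℝ) u}) :=
    MeasurableSet.iInter fun j => (measurable_pi_apply j) measurableSet_Ioo
  have he2 : simplexSet K u
      = {t : Fin K → ℝ | StrictMono t} ∩ ⋂ j, {t | t j ∈ Set.Ioo (0:ℝ) u} := by
    ext t; simp [simplexSet, Set.mem_iInter]
  rw [he2]; exact h1.inter h2

lemma snoc_mem_simplexSet_iff {K : ℕ} {u s : ℝ} {t : Fin K → ℝ} :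
    Fin.snoc t s ∈ simplexSet (K+1) u ↔ s ∈ Set.Ioo (0:ℝ) u ∧ t ∈ simplexSet K s := by
  constructor
  · rintro ⟨hm, hio⟩
    have hs : s ∈ Set.Ioo (0:ℝ) u := by simpa [Fin.snoc_last] using hio (Fin.last K)
    refine ⟨hs, ?_, ?_⟩
    · intro i j hij
      have := hm (show Fin.castSucc i < Fin.castSucc j from Fin.castSucc_lt_castSucc_iff.mpr hij)
      simpa [Fin.snoc_castSucc] using this
    · intro j
      have h0 : (0:ℝ) < t j := by simpa [Fin.snoc_castSucc] using (hio (Fin.castSucc j)).1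
      have h1 : t j < s := by
        have := hm (Fin.castSucc_lt_last j)
        simpa [Fin.snoc_castSucc, Fin.snoc_last] using this
      exact ⟨h0, h1⟩
  · rintro ⟨hs, hm, hio⟩
    constructor
    · intro i j hij
      rcases eq_or_ne j (Fin.last K) with rfl | hj
      · have hi : i ≠ Fin.last K := ne_of_lt hij
        rw [Fin.snoc_last, ← Fin.castSucc_castPred i hi, Fin.snoc_castSucc]
        exact (hio _).2
      · have hjl : j < Fin.last K := lt_of_le_of_ne (Fin.le_last j) hj
        have hi : i ≠ Fin.last K := ne_of_lt (hij.trans hjl)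
        rw [← Fin.castSucc_castPred j hj, ← Fin.castSucc_castPred i hi,
          Fin.snoc_castSucc, Fin.snoc_castSucc]
        apply hm
        rw [← Fin.castSucc_lt_castSucc_iff, Fin.castSucc_castPred, Fin.castSucc_castPred]
        exact hij
    · intro j
      rcases eq_or_ne j (Fin.last K) with rfl | hj
      · rw [Fin.snoc_last]; exact hs
      · rw [← Fin.castSucc_castPred j hj, Fin.snoc_castSucc]
        exact ⟨(hio _).1, lt_trans (hio _).2 hs.2⟩

lemma measurable_mono_integrand {K : ℕ} (f : ℕ → ℕ) :
    Measurable (fun t : Fin K → ℝ => ∏ j : Fin K, ENNReal.ofReal ((t j) ^ (f ↑j) * (t j)⁻¹)) := by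
  apply Finset.measurable_prod
  intro j _
  exact ENNReal.measurable_ofReal.comp
    (((measurable_pi_apply j).pow_const _).mul (measurable_pi_apply j).inv)

lemma simplex_lintegral (K : ℕ) (f : ℕ → ℕ) :
    ∀ (_ : ∀ r < K, 0 < ∑ l ∈ range (r+1), f l) (u : ℝ) (_ : 0 < u),
    ∫⁻ t in simplexSet K u, ∏ j : Fin K, ENNReal.ofReal ((t j) ^ (f ↑j) * (t j)⁻¹)
      = ENNReal.ofReal u ^ (∑ l ∈ range K, f l) *
        ∏ r ∈ range K, ((∑ l ∈ range (r+1), f l : ℕ) : ℝ≥0∞)⁻¹ := by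
  induction K with
  | zero =>
    intro _ u hu
    have hset : simplexSet 0 u = Set.univ := by
      ext t
      simp only [simplexSet, Set.mem_setOf_eq, Set.mem_univ, iff_true]
      exact ⟨fun a b h => a.elim0, fun j => j.elim0⟩
    simp only [Finset.univ_eq_empty, Finset.prod_empty, Finset.range_zero, Finset.sum_empty,
      pow_zero, one_mul, hset]
    rw [MeasureTheory.setLIntegral_univ, lintegral_one]
    rw [show (volume : Measure (Fin 0 → ℝ)) = Measure.pi fun _ => volume from volume_pi,
      Measure.pi_univ]
    simp
  | succ K ih =>
    intro hf u hu
    set SK : ℕ := ∑ l ∈ range K, f l with hSK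
    set D : ℝ≥0∞ := ∏ r ∈ range K, ((∑ l ∈ range (r+1), f l : ℕ) : ℝ≥0∞)⁻¹ with hD
    set c : ℕ := SK + f K with hc
    have hc1 : 1 ≤ c := by
      have := hf K (by omega)
      rw [Finset.sum_range_succ] at this
      omega
    have hf' : ∀ r < K, 0 < ∑ l ∈ range (r+1), f l := fun r hr => hf r (by omega)
    set F : (Fin (K+1) → ℝ) → ℝ≥0∞ :=
      fun t => ∏ j : Fin (K+1), ENNReal.ofReal ((t j) ^ (f ↑j) * (t j)⁻¹) with hF
    have hFm : Measurable F := measurable_mono_integrand f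
    have hSm : MeasurableSet (simplexSet (K+1) u) := measurableSet_simplexSet _ _
    set e := MeasurableEquiv.piFinSuccAbove (fun _ : Fin (K+1) => ℝ) (Fin.last K) with he
    have hsymm : ∀ p : ℝ × (Fin K → ℝ), e.symm p = Fin.snoc p.2 p.1 := by
      intro p; simp [he, MeasurableEquiv.piFinSuccAbove, Fin.snocEquiv]
    have hmp := (measurePreserving_piFinSuccAbove
      (fun _ : Fin (K+1) => (volume : Measure ℝ)) (Fin.last K)).symm
    -- main computation
    rw [← lintegral_indicator hSm]
    rw [show (volume : Measure (Fin (K+1) → ℝ)) = Measure.pi fun _ => volume from volume_pi]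
    rw [← hmp.lintegral_comp_emb (MeasurableEquiv.measurableEmbedding e.symm)]
    have hme : Measurable fun a : ℝ × (Fin K → ℝ) => (simplexSet (K+1) u).indicator F (e.symm a) :=
      (hFm.indicator hSm).comp e.symm.measurable
    rw [lintegral_prod _ hme.aemeasurable]
    have hinner : ∀ s : ℝ,
        (∫⁻ tk : Fin K → ℝ, (simplexSet (K+1) u).indicator F (e.symm (s, tk))
            ∂(Measure.pi fun _ => volume))
        = Set.indicator (Set.Ioo (0:ℝ) u)
            (fun s => ENNReal.ofReal (s ^ (f K) * s⁻¹) * (ENNReal.ofReal s ^ SK * D)) s := by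
      intro s
      simp only [hsymm]
      by_cases hs : s ∈ Set.Ioo (0:ℝ) u
      · rw [Set.indicator_of_mem hs]
        have hsnoc : ∀ tk : Fin K → ℝ, (simplexSet (K+1) u).indicator F (Fin.snoc tk s)
            = Set.indicator (simplexSet K s)
              (fun tk => (∏ j : Fin K, ENNReal.ofReal ((tk j) ^ (f ↑j) * (tk j)⁻¹))
                * ENNReal.ofReal (s ^ (f K) * s⁻¹)) tk := by
          intro tk
          by_cases h : tk ∈ simplexSet K s
          · rw [Set.indicator_of_mem (snoc_mem_simplexSet_iff.mpr ⟨hs, h⟩),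
              Set.indicator_of_mem h, hF]
            dsimp only
            rw [Fin.prod_univ_castSucc]
            congr 1
            · apply Finset.prod_congr rfl
              intro j _
              rw [Fin.snoc_castSucc, Fin.coe_castSucc]
            · rw [Fin.snoc_last, Fin.val_last]
          · rw [Set.indicator_of_notMem (fun hmem => h (snoc_mem_simplexSet_iff.mp hmem).2),
              Set.indicator_of_notMem h]
        simp_rw [hsnoc]
        rw [lintegral_indicator (measurableSet_simplexSet K s)]
        rw [lintegral_mul_const _ (measurable_mono_integrand f)]
        rw [show (Measure.pi fun _ : Fin K => (volume : Measure ℝ)) = volume from volume_pi.symm]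
        rw [ih hf' s hs.1]
        ring
      · rw [Set.indicator_of_notMem hs]
        have hz : ∀ tk : Fin K → ℝ, (simplexSet (K+1) u).indicator F (Fin.snoc tk s) = 0 :=
          fun tk => Set.indicator_of_notMem
            (fun hmem => hs (snoc_mem_simplexSet_iff.mp hmem).1) F
        simp only [hz, lintegral_zero]
    simp_rw [hinner]
    rw [lintegral_indicator measurableSet_Ioo]
    have hcong : ∫⁻ s in Set.Ioo (0:ℝ) u,
        ENNReal.ofReal (s ^ (f K) * s⁻¹) * (ENNReal.ofReal s ^ SK * D)
        = ∫⁻ s in Set.Ioo (0:ℝ) u, ENNReal.ofReal (s ^ (c - 1)) * D := by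
      apply setLIntegral_congr_fun measurableSet_Ioo
      intro s hs; dsimp only
      have h0 : (0:ℝ) < s := hs.1
      have key : s ^ (f K) * s⁻¹ * s ^ SK = s ^ (c - 1) := by
        have e1 : s ^ (c - 1) * s = s ^ c := by
          rw [← pow_succ]; congr 1; omega
        have e2 : s ^ (f K) * s⁻¹ * s ^ SK = s ^ c * s⁻¹ := by
          rw [hc, pow_add]; ring
        rw [e2, ← e1, mul_assoc, mul_inv_cancel₀ h0.ne', mul_one]
      rw [← mul_assoc, ← ENNReal.ofReal_pow h0.le, ← ENNReal.ofReal_mul (by positivity), key]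
    rw [hcong, lintegral_mul_const _ (by fun_prop : Measurable fun s : ℝ => ENNReal.ofReal (s ^ (c - 1))),
      lintegral_pow_Ioo c hc1 hu]
    rw [Finset.sum_range_succ, Finset.prod_range_succ, ← hSK, ← hc]
    rw [show ∑ l ∈ range (K+1), f l = c from by rw [Finset.sum_range_succ, ← hSK, ← hc]]
    ring

def MN (n : ℕ) (m : Fin n → ℕ) : ℕ → ℕ := fun i => if h : i < n then m ⟨i, h⟩ else 0
def stN (n : ℕ) (m : Fin n → ℕ) : ℕ → ℕ := fun i => ∑ l ∈ range i, MN n m l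

lemma MN_coe (n : ℕ) (m : Fin n → ℕ) (i : Fin n) : MN n m ↑i = m i := by
  unfold MN; rw [dif_pos i.2]

lemma stN_mono (n : ℕ) (m : Fin n → ℕ) {i i' : ℕ} (h : i ≤ i') : stN n m i ≤ stN n m i' :=
  Finset.sum_le_sum_of_subset (Finset.range_subset_range.mpr h)

lemma stN_succ (n : ℕ) (m : Fin n → ℕ) (i : ℕ) : stN n m (i+1) = stN n m i + MN n m i :=
  Finset.sum_range_succ _ _

lemma MN_pos (n : ℕ) (m : Fin n → ℕ) (hm : ∀ i, 0 < m i) {i : ℕ} (hi : i < n) :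
    0 < MN n m i := by unfold MN; rw [dif_pos hi]; exact hm _

lemma stN_lt (n : ℕ) (m : Fin n → ℕ) (hm : ∀ i, 0 < m i) {i i' : ℕ} (h : i < i') (h' : i < n) :
    stN n m i < stN n m i' := by
  have h1 := stN_succ n m i
  have h2 := MN_pos n m hm h'
  have h3 := stN_mono n m (show i + 1 ≤ i' from h)
  omega

lemma sum_ite_st_block (n : ℕ) (m : Fin n → ℕ) (hm : ∀ i, 0 < m i) {α : Type*}
    [AddCommMonoid α] (v : ℕ → α) {i s : ℕ} (hi : i < n) (hs : s < MN n m i) :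
    ∑ i' ∈ range n, (if stN n m i + s = stN n m i' then v i' else 0)
      = if s = 0 then v i else 0 := by
  have key : ∀ i' < n, (stN n m i + s = stN n m i' ↔ i' = i ∧ s = 0) := by
    intro i' hi'
    constructor
    · intro h
      rcases lt_trichotomy i' i with hlt | rfl | hgt
      · have := stN_lt n m hm hlt hi'
        omega
      · exact ⟨rfl, by omega⟩
      · have h1 : stN n m (i+1) ≤ stN n m i' := stN_mono n m hgt
        have h2 := stN_succ n m i
        omega
    · rintro ⟨rfl, rfl⟩; simp
  have step1 : ∑ i' ∈ range n, (if stN n m i + s = stN n m i' then v i' else 0)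
      = ∑ i' ∈ range n, (if i' = i ∧ s = 0 then v i' else 0) :=
    Finset.sum_congr rfl fun i' hi' => if_congr (key i' (Finset.mem_range.mp hi')) rfl rfl
  rw [step1]
  by_cases hs0 : s = 0
  · subst hs0
    simp only [and_true]
    rw [Finset.sum_ite_eq' (range n) i v, if_pos (Finset.mem_range.mpr hi)]
    simp
  · simp [hs0]

def kNf (n : ℕ) (k : Fin n → ℕ) : ℕ → ℕ := fun i => if h : i < n then k ⟨i, h⟩ else 0

lemma kNf_coe (n : ℕ) (k : Fin n → ℕ) (i : Fin n) : kNf n k ↑i = k i := by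
  unfold kNf; rw [dif_pos i.2]

def Fkf (n : ℕ) (m : Fin n → ℕ) (k : Fin n → ℕ) : ℕ → ℕ :=
  fun r => ∑ i ∈ range n, if r = stN n m i then kNf n k i + 1 else 0

lemma Fkf_block (n : ℕ) (m : Fin n → ℕ) (hm : ∀ i, 0 < m i) (k : Fin n → ℕ) {i s : ℕ}
    (hi : i < n) (hs : s < MN n m i) :
    Fkf n m k (stN n m i + s) = if s = 0 then kNf n k i + 1 else 0 :=
  sum_ite_st_block n m hm _ hi hs

lemma Fkf_partial (n : ℕ) (m : Fin n → ℕ) (k : Fin n → ℕ) (R : ℕ) :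
    ∑ l ∈ range R, Fkf n m k l
      = ∑ i ∈ range n, if stN n m i < R then kNf n k i + 1 else 0 := by
  unfold Fkf
  rw [Finset.sum_comm]
  refine Finset.sum_congr rfl fun i _ => ?_
  rw [Finset.sum_ite_eq' (range R) (stN n m i) (fun _ => kNf n k i + 1)]
  simp [Finset.mem_range]

lemma Fkf_partial_block (n : ℕ) (m : Fin n → ℕ) (hm : ∀ i, 0 < m i) (k : Fin n → ℕ)
    {i s : ℕ} (hi : i < n) (hs : s < MN n m i) :
    ∑ l ∈ range (stN n m i + s + 1), Fkf n m k l
      = ∑ i' ∈ range (i+1), (kNf n k i' + 1) := by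
  rw [Fkf_partial]
  have key : ∀ i' ∈ range n, (stN n m i' < stN n m i + s + 1 ↔ i' ∈ range (i+1)) := by
    intro i' _
    simp only [Finset.mem_range]
    constructor
    · intro h
      by_contra hc
      have h1 : stN n m (i+1) ≤ stN n m i' := stN_mono n m (by omega)
      have h2 := stN_succ n m i
      omega
    · intro h
      have h1 : stN n m i' ≤ stN n m i := stN_mono n m (by omega)
      omega
  have step1 : (∑ i' ∈ range n, if stN n m i' < stN n m i + s + 1 then kNf n k i' + 1 else 0)
      = ∑ i' ∈ range n, if i' ∈ range (i+1) then kNf n k i' + 1 else 0 :=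
    Finset.sum_congr rfl fun i' hi' => if_congr (key i' hi') rfl rfl
  rw [step1, Finset.sum_ite_mem,
    Finset.inter_eq_right.mpr (Finset.range_subset_range.mpr (by omega))]

lemma geom_expand {A τ : ℝ} (hA : 1 < A) (hτ0 : 0 ≤ τ) (hτ1 : τ < 1) :
    ENNReal.ofReal ((A - τ)⁻¹) = ∑' κ : ℕ, ENNReal.ofReal (τ ^ κ * (A⁻¹) ^ (κ + 1)) := by
  have hA0 : (0:ℝ) < A := lt_trans one_pos hA
  have hr1 : τ * A⁻¹ < 1 := by
    rw [← div_eq_mul_inv, div_lt_one hA0]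
    exact lt_trans hτ1 hA
  have hr0 : 0 ≤ τ * A⁻¹ := by positivity
  have heq : ∀ κ : ℕ, τ ^ κ * (A⁻¹) ^ (κ + 1) = (τ * A⁻¹) ^ κ * A⁻¹ := by
    intro κ; rw [mul_pow, pow_succ]; ring
  have hsum : Summable fun κ : ℕ => τ ^ κ * (A⁻¹) ^ (κ + 1) := by
    simp_rw [heq]
    exact (summable_geometric_of_lt_one hr0 hr1).mul_right _
  have hval : ∑' κ : ℕ, τ ^ κ * (A⁻¹) ^ (κ + 1) = (A - τ)⁻¹ := by
    simp_rw [heq]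
    rw [tsum_mul_right, tsum_geometric_of_lt_one hr0 hr1, ← mul_inv]
    congr 1
    field_simp
  rw [← hval, ENNReal.ofReal_tsum_of_nonneg (fun κ => by positivity) hsum]

lemma Iic_singleton_of_zero {n : ℕ} (i : Fin n) (hi : (i:ℕ) = 0) :
    Finset.Iic i = {i} := by
  ext l; simp only [Finset.mem_Iic, Finset.mem_singleton, Fin.le_def, Fin.ext_iff]; omega

lemma Iic_insert_of_ne_zero {n : ℕ} (i : Fin n) (hi : (i:ℕ) ≠ 0) (h : (i:ℕ) - 1 < n) :
    Finset.Iic i = insert i (Finset.Iic (⟨(i:ℕ) - 1, h⟩ : Fin n))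
      ∧ i ∉ Finset.Iic (⟨(i:ℕ) - 1, h⟩ : Fin n) := by
  constructor
  · ext l
    simp only [Finset.mem_Iic, Finset.mem_insert, Fin.le_def, Fin.ext_iff]
    omega
  · simp only [Finset.mem_Iic, Fin.le_def]
    omega

def accEquiv (n : ℕ) : (Fin n → ℕ) ≃ {c : Fin n → ℕ // StrictMono c ∧ ∀ i, 0 < c i} where
  toFun k := ⟨fun i => ∑ l ∈ Finset.Iic i, (k l + 1), by
    constructor
    · intro i j hij
      refine Finset.sum_lt_sum_of_subset (Finset.Iic_subset_Iic.mpr hij.le)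
        (Finset.mem_Iic.mpr le_rfl) (fun hc => ?_) (by omega) (fun _ _ _ => by omega)
      exact absurd (Finset.mem_Iic.mp hc) (not_le.mpr hij)
    · intro i
      show 0 < ∑ l ∈ Finset.Iic i, (k l + 1)
      have h1 : k i + 1 ≤ ∑ l ∈ Finset.Iic i, (k l + 1) :=
        Finset.single_le_sum (f := fun l => k l + 1) (fun _ _ => by omega)
          (Finset.mem_Iic.mpr (le_refl i))
      omega⟩
  invFun c := fun i =>
    kNf n c.1 ↑i - (if (i:ℕ) = 0 then 0 else kNf n c.1 ((i:ℕ) - 1)) - 1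
  left_inv k := by
    funext i
    dsimp only
    have hT : kNf n (fun i => ∑ l ∈ Finset.Iic i, (k l + 1)) ↑i
        = ∑ l ∈ Finset.Iic i, (k l + 1) := kNf_coe n _ i
    by_cases hi : (i:ℕ) = 0
    · rw [hT, if_pos hi, Iic_singleton_of_zero i hi, Finset.sum_singleton]
      omega
    · have hlt : (i:ℕ) - 1 < n := by have := i.2; omega
      obtain ⟨hIic, hnm⟩ := Iic_insert_of_ne_zero i hi hlt
      have hT2 : kNf n (fun i => ∑ l ∈ Finset.Iic i, (k l + 1)) ((i:ℕ) - 1)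
          = ∑ l ∈ Finset.Iic (⟨(i:ℕ) - 1, hlt⟩ : Fin n), (k l + 1) := by
        unfold kNf; rw [dif_pos hlt]
      rw [hT, if_neg hi, hT2, hIic, Finset.sum_insert hnm]
      omega
  right_inv c := by
    ext i
    show ∑ l ∈ Finset.Iic i,
      ((kNf n c.1 ↑l - (if (l:ℕ) = 0 then 0 else kNf n c.1 ((l:ℕ) - 1)) - 1) + 1) = c.1 i
    obtain ⟨c, hmono, hpos⟩ := c
    suffices H : ∀ N (i : Fin n), (i:ℕ) = N →
        ∑ l ∈ Finset.Iic i,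
          ((kNf n c ↑l - (if (l:ℕ) = 0 then 0 else kNf n c ((l:ℕ) - 1)) - 1) + 1) = c i by
      exact H ↑i i rfl
    intro N
    induction N with
    | zero =>
      intro i hiN
      rw [Iic_singleton_of_zero i hiN, Finset.sum_singleton, kNf_coe, if_pos hiN]
      have := hpos i
      omega
    | succ N ihN =>
      intro i hiN
      have hlt : (i:ℕ) - 1 < n := by have := i.2; omega
      have hi : (i:ℕ) ≠ 0 := by omega
      obtain ⟨hIic, hnm⟩ := Iic_insert_of_ne_zero i hi hlt
      set ip : Fin n := ⟨(i:ℕ) - 1, hlt⟩ with hip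
      have hrec := ihN ip (by simp [hip]; omega)
      rw [hIic, Finset.sum_insert hnm, hrec, kNf_coe, if_neg hi]
      have hcp : kNf n c ((i:ℕ) - 1) = c ip := by unfold kNf; rw [dif_pos hlt]
      have hcc : c ip < c i := hmono (show ip < i by rw [Fin.lt_def]; simp [hip]; omega)
      rw [hcp]
      omega

def ANf (n : ℕ) (a : Fin n → ℝ) : ℕ → ℝ := fun i => if h : i < n then a ⟨i, h⟩ else 0

lemma ANf_coe (n : ℕ) (a : Fin n → ℝ) (i : Fin n) : ANf n a ↑i = a i := by
  unfold ANf; rw [dif_pos i.2]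

def Bff (n : ℕ) (m : Fin n → ℕ) (a : Fin n → ℝ) : ℕ → ℝ :=
  fun r => ∑ i ∈ range n, if r = stN n m i then ANf n a i else 0

lemma Bff_block (n : ℕ) (m : Fin n → ℕ) (hm : ∀ i, 0 < m i) (a : Fin n → ℝ) {i s : ℕ}
    (hi : i < n) (hs : s < MN n m i) :
    Bff n m a (stN n m i + s) = if s = 0 then ANf n a i else 0 :=
  sum_ite_st_block n m hm _ hi hs

lemma block_prod_st {α : Type*} [CommMonoid α] (n : ℕ) (m : Fin n → ℕ) (g : ℕ → α) :
    ∏ r ∈ range (stN n m n), g r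
      = ∏ i ∈ range n, ∏ s ∈ range (MN n m i), g (stN n m i + s) :=
  block_prod (MN n m) g n

def tNf (K : ℕ) (t : Fin K → ℝ) : ℕ → ℝ := fun r => if h : r < K then t ⟨r, h⟩ else 0

lemma prod_sub_split (n : ℕ) (m : Fin n → ℕ) (hm : ∀ i, 0 < m i) (a : Fin n → ℝ)
    (t : ℕ → ℝ) :
    ∏ r ∈ range (stN n m n), (t r - Bff n m a r)⁻¹
      = ∏ i ∈ range n, ((-1) * ((ANf n a i - t (stN n m i))⁻¹
          * ∏ s ∈ range (MN n m i - 1), (t (stN n m i + s + 1))⁻¹)) := by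
  rw [block_prod_st]
  refine Finset.prod_congr rfl fun i hi => ?_
  have hi' := Finset.mem_range.mp hi
  have hM := MN_pos n m hm hi'
  rw [show range (MN n m i) = range ((MN n m i - 1) + 1) from by congr 1; omega,
    Finset.prod_range_succ']
  have h0 : Bff n m a (stN n m i + 0) = ANf n a i := by
    rw [Bff_block n m hm a hi' (by omega), if_pos rfl]
  have hrest : ∀ s ∈ range (MN n m i - 1),
      (t (stN n m i + (s + 1)) - Bff n m a (stN n m i + (s + 1)))⁻¹
        = (t (stN n m i + s + 1))⁻¹ := by
    intro s hs
    have hs' := Finset.mem_range.mp hs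
    rw [Bff_block n m hm a hi' (by omega), if_neg (by omega), sub_zero, add_assoc]
  rw [Finset.prod_congr rfl hrest, h0, add_zero]
  rw [show t (stN n m i) - ANf n a i = -(ANf n a i - t (stN n m i)) from by ring, inv_neg]
  ring

lemma prod_mono_split (n : ℕ) (m : Fin n → ℕ) (hm : ∀ i, 0 < m i) (k : Fin n → ℕ)
    (t : ℕ → ℝ) (ht : ∀ r < stN n m n, 0 < t r) :
    ∏ r ∈ range (stN n m n), ENNReal.ofReal (t r ^ (Fkf n m k r) * (t r)⁻¹)
      = ∏ i ∈ range n, (ENNReal.ofReal (t (stN n m i) ^ (kNf n k i))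
          * ∏ s ∈ range (MN n m i - 1), ENNReal.ofReal ((t (stN n m i + s + 1))⁻¹)) := by
  rw [block_prod_st]
  refine Finset.prod_congr rfl fun i hi => ?_
  have hi' := Finset.mem_range.mp hi
  have hM := MN_pos n m hm hi'
  rw [show range (MN n m i) = range ((MN n m i - 1) + 1) from by congr 1; omega,
    Finset.prod_range_succ']
  have hstpos : stN n m i < stN n m n := stN_lt n m hm hi' hi'
  have ht0 : 0 < t (stN n m i) := ht _ hstpos
  have h0 : ENNReal.ofReal (t (stN n m i + 0) ^ (Fkf n m k (stN n m i + 0))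
      * (t (stN n m i + 0))⁻¹) = ENNReal.ofReal (t (stN n m i) ^ (kNf n k i)) := by
    rw [Fkf_block n m hm k hi' (show 0 < MN n m i from by omega), if_pos rfl, add_zero]
    congr 1
    rw [pow_succ, mul_assoc, mul_inv_cancel₀ ht0.ne', mul_one]
  have hrest : ∀ s ∈ range (MN n m i - 1),
      ENNReal.ofReal (t (stN n m i + (s + 1)) ^ (Fkf n m k (stN n m i + (s + 1)))
          * (t (stN n m i + (s + 1)))⁻¹)
        = ENNReal.ofReal ((t (stN n m i + s + 1))⁻¹) := by
    intro s hs
    have hs' := Finset.mem_range.mp hs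
    rw [Fkf_block n m hm k hi' (by omega), if_neg (by omega), pow_zero, one_mul, add_assoc]
  rw [Finset.prod_congr rfl hrest, h0, mul_comm]

/-- The real multiple polylogarithm `Li_{m₁,…,mₙ}(x₁,…,xₙ)`, defined as the sum of the
series `∑_{0<k₁<⋯<kₙ} x₁^{k₁}⋯xₙ^{kₙ}/(k₁^{m₁}⋯kₙ^{mₙ})`. -/
noncomputable def multiPolylogReal (n : ℕ) (m : Fin n → ℕ) (x : Fin n → ℝ) : ℝ :=
  ∑' k : {k : Fin n → ℕ // StrictMono k ∧ ∀ i, 0 < k i},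
    ∏ i, x i ^ (k.1 i) / ((k.1 i : ℝ)) ^ (m i)

/-- with `K = m₁+⋯+mₙ`, `0 < xᵢ < 1`, `aᵢ = 1/(xᵢ⋯xₙ)`, and `(b₁,…,b_K)`
the concatenation of the blocks `(aᵢ, 0, …, 0)` (with `mᵢ − 1` zeros), the function
`∏ⱼ 1/(tⱼ − bⱼ)` is integrable on the open simplex `0 < t₁ < ⋯ < t_K < 1` and
`Li_{m₁,…,mₙ}(x₁,…,xₙ) = (−1)ⁿ ∫_{0<t₁<⋯<t_K<1} ∏ⱼ 1/(tⱼ − bⱼ)`.  Here `bⱼ = aᵢ` if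
`j` is the starting position `∑_{l<i} m_l` of the `i`-th block and `bⱼ = 0` otherwise. -/
theorem multiPolylog_eq_hyperlog_integral (n : ℕ) (m : Fin n → ℕ) (hm : ∀ i, 0 < m i)
    (x : Fin n → ℝ) (hx : ∀ i, x i ∈ Set.Ioo (0 : ℝ) 1) :
    let K : ℕ := ∑ i, m i
    let a : Fin n → ℝ := fun i => (∏ l ∈ Finset.Ici i, x l)⁻¹
    let b : Fin K → ℝ := fun j =>
      ∑ i : Fin n, if (j : ℕ) = ∑ l ∈ Finset.Iio i, m l then a i else 0
    let S : Set (Fin K → ℝ) := {t | StrictMono t ∧ ∀ j, t j ∈ Set.Ioo (0 : ℝ) 1}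
    IntegrableOn (fun t : Fin K → ℝ => ∏ j, (t j - b j)⁻¹) S ∧
      multiPolylogReal n m x = (-1 : ℝ) ^ n * ∫ t in S, ∏ j, (t j - b j)⁻¹ := by
  intro K a b S
  have hx0 : ∀ i, 0 < x i := fun i => (hx i).1
  have hx1 : ∀ i, x i < 1 := fun i => (hx i).2
  have hprodx : ∀ i : Fin n, 0 < ∏ l ∈ Finset.Ici i, x l :=
    fun i => Finset.prod_pos fun l _ => hx0 l
  have hprodx1 : ∀ i : Fin n, ∏ l ∈ Finset.Ici i, x l < 1 := by
    intro i
    have hmem : i ∈ Finset.Ici i := Finset.mem_Ici.mpr le_rfl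
    rw [← Finset.mul_prod_erase _ _ hmem]
    have h1 : ∏ l ∈ (Finset.Ici i).erase i, x l ≤ 1 :=
      Finset.prod_le_one (fun l _ => (hx0 l).le) (fun l _ => (hx1 l).le)
    calc x i * ∏ l ∈ (Finset.Ici i).erase i, x l ≤ x i * 1 :=
          mul_le_mul_of_nonneg_left h1 (hx0 i).le
      _ = x i := mul_one _
      _ < 1 := hx1 i
  have ha1 : ∀ i : Fin n, 1 < a i := fun i => one_lt_inv₀ (hprodx i) |>.mpr (hprodx1 i)
  have ha0 : ∀ i : Fin n, (0:ℝ) < a i := fun i => lt_trans one_pos (ha1 i)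
  have hainv : ∀ i : Fin n, (a i)⁻¹ = ∏ l ∈ Finset.Ici i, x l := fun i => inv_inv _
  have hK : (K:ℕ) = stN n m n := by
    show ∑ i : Fin n, m i = _
    rw [show stN n m n = ∑ l ∈ range n, MN n m l from rfl,
      ← Fin.sum_univ_eq_sum_range (MN n m) n]
    exact Finset.sum_congr rfl fun i _ => (MN_coe n m i).symm
  have hSdef : S = simplexSet K 1 := rfl
  have hSmeas : MeasurableSet S := measurableSet_simplexSet K 1
  have hb : ∀ j : Fin K, b j = Bff n m a ↑j := by
    intro j
    show (∑ i : Fin n, if (j:ℕ) = ∑ l ∈ Finset.Iio i, m l then a i else 0) = _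
    rw [show Bff n m a ↑j = ∑ i ∈ range n, (fun iN =>
      if (j:ℕ) = stN n m iN then ANf n a iN else 0) i from rfl]
    rw [← Fin.sum_univ_eq_sum_range (fun iN =>
      if (j:ℕ) = stN n m iN then ANf n a iN else 0) n]
    refine Finset.sum_congr rfl fun i _ => ?_
    have hcond : (∑ l ∈ Finset.Iio i, m l) = stN n m ↑i := by
      rw [show stN n m ↑i = ∑ l ∈ range ↑i, MN n m l from rfl]
      exact sum_Iio_fin m (MN n m) (MN_coe n m) i
    rw [hcond, ANf_coe]
  -- pointwise block splitting for t ∈ S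
  have htval : ∀ t : Fin K → ℝ, t ∈ S → ∀ r, r < K → 0 < tNf K t r ∧ tNf K t r < 1 := by
    intro t ht r hr
    unfold tNf; rw [dif_pos hr]
    exact ⟨(ht.2 _).1, (ht.2 _).2⟩
  have hstin : ∀ i < n, ∀ s, s < MN n m i → stN n m i + s < K := by
    intro i hi s hs
    have h1 := stN_succ n m i
    have h2 : stN n m (i+1) ≤ stN n m n := stN_mono n m (by omega)
    omega
  have hst0 : ∀ i < n, stN n m i < K := by
    intro i hi
    have := hstin i hi 0 (MN_pos n m hm hi)
    omega
  have hsplit : ∀ t : Fin K → ℝ, t ∈ S →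
      (-1:ℝ)^n * ∏ j : Fin K, (t j - b j)⁻¹
        = ∏ i ∈ range n, ((ANf n a i - tNf K t (stN n m i))⁻¹
            * ∏ s ∈ range (MN n m i - 1), (tNf K t (stN n m i + s + 1))⁻¹) := by
    intro t ht
    have h1 : ∏ j : Fin K, (t j - b j)⁻¹
        = ∏ r ∈ range (stN n m n), (tNf K t r - Bff n m a r)⁻¹ := by
      rw [← hK, ← Fin.prod_univ_eq_prod_range (fun r => (tNf K t r - Bff n m a r)⁻¹) K]
      refine Finset.prod_congr rfl fun j _ => ?_
      rw [hb j]
      congr 2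
      unfold tNf; rw [dif_pos j.2]
    rw [h1, prod_sub_split n m hm a (tNf K t), Finset.prod_mul_distrib,
      Finset.prod_const, Finset.card_range, ← mul_assoc, ← pow_add,
      Even.neg_one_pow (Even.add_self n), one_mul]
  have hWpos : ∀ t : Fin K → ℝ, t ∈ S → ∀ i ∈ range n,
      0 < (ANf n a i - tNf K t (stN n m i))⁻¹
        ∧ ∀ s ∈ range (MN n m i - 1), 0 < (tNf K t (stN n m i + s + 1))⁻¹ := by
    intro t ht i hi
    have hi' := Finset.mem_range.mp hi
    have hAi : ANf n a i = a ⟨i, hi'⟩ := by unfold ANf; rw [dif_pos hi']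
    have hstKi : stN n m i < K := hst0 i hi'
    have htv := htval t ht _ hstKi
    constructor
    · rw [hAi]
      have h3 : tNf K t (stN n m i) < a ⟨i, hi'⟩ := lt_trans htv.2 (ha1 ⟨i, hi'⟩)
      exact inv_pos.mpr (by linarith)
    · intro s hs
      have hs' := Finset.mem_range.mp hs
      have hM := MN_pos n m hm hi'
      have hin : stN n m i + s + 1 < K := by
        have := hstin i hi' (s+1) (by omega)
        omega
      have := (htval t ht _ hin).1
      positivity
  have hsign : ∀ t : Fin K → ℝ, t ∈ S → 0 ≤ (-1:ℝ)^n * ∏ j : Fin K, (t j - b j)⁻¹ := by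
    intro t ht
    rw [hsplit t ht]
    refine Finset.prod_nonneg fun i hi => ?_
    obtain ⟨h1, h2⟩ := hWpos t ht i hi
    exact mul_nonneg h1.le (Finset.prod_nonneg fun s hs => (h2 s hs).le)
  -- the pointwise series expansion
  have hpt : ∀ t : Fin K → ℝ, t ∈ S →
      ENNReal.ofReal ((-1:ℝ)^n * ∏ j : Fin K, (t j - b j)⁻¹)
        = ∑' k : Fin n → ℕ,
            ((∏ i : Fin n, ENNReal.ofReal ((a i)⁻¹ ^ (k i + 1))) *
              ∏ j : Fin K, ENNReal.ofReal (t j ^ (Fkf n m k ↑j) * (t j)⁻¹)) := by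
    intro t ht
    rw [hsplit t ht]
    rw [ENNReal.ofReal_prod_of_nonneg (fun i hi => by
      obtain ⟨h1, h2⟩ := hWpos t ht i hi
      exact mul_nonneg h1.le (Finset.prod_nonneg fun s hs => (h2 s hs).le))]
    have hblock : ∀ i ∈ range n,
        ENNReal.ofReal ((ANf n a i - tNf K t (stN n m i))⁻¹
            * ∏ s ∈ range (MN n m i - 1), (tNf K t (stN n m i + s + 1))⁻¹)
          = ∑' κ : ℕ, ENNReal.ofReal
                (tNf K t (stN n m i) ^ κ * ((ANf n a i)⁻¹) ^ (κ+1))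
              * ∏ s ∈ range (MN n m i - 1),
                  ENNReal.ofReal ((tNf K t (stN n m i + s + 1))⁻¹) := by
      intro i hi
      have hi' := Finset.mem_range.mp hi
      have hAi : ANf n a i = a ⟨i, hi'⟩ := by unfold ANf; rw [dif_pos hi']
      have htv := htval t ht _ (hst0 i hi')
      have hA1 : 1 < ANf n a i := by rw [hAi]; exact ha1 _
      rw [ENNReal.ofReal_mul (inv_nonneg.mpr (by
        have h3 : tNf K t (stN n m i) < ANf n a i := lt_trans htv.2 hA1
        linarith))]
      rw [ENNReal.ofReal_prod_of_nonneg (fun s hs => by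
        obtain ⟨_, h2⟩ := hWpos t ht i hi
        exact (h2 s hs).le)]
      rw [geom_expand hA1 htv.1.le htv.2, ENNReal.tsum_mul_right]
    rw [Finset.prod_congr rfl hblock]
    rw [← Fin.prod_univ_eq_prod_range (fun i => ∑' κ : ℕ, ENNReal.ofReal
        (tNf K t (stN n m i) ^ κ * ((ANf n a i)⁻¹) ^ (κ+1))
        * ∏ s ∈ range (MN n m i - 1),
            ENNReal.ofReal ((tNf K t (stN n m i + s + 1))⁻¹)) n]
    rw [prod_tsum_ennreal n (fun i κ => ENNReal.ofReal
        (tNf K t (stN n m (↑i : ℕ)) ^ κ * ((ANf n a ↑i)⁻¹) ^ (κ+1))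
        * ∏ s ∈ range (MN n m ↑i - 1),
            ENNReal.ofReal ((tNf K t (stN n m ↑i + s + 1))⁻¹))]
    refine tsum_congr fun k => ?_
    -- per-k identity
    have hG : ∏ j : Fin K, ENNReal.ofReal (t j ^ (Fkf n m k ↑j) * (t j)⁻¹)
        = ∏ i ∈ range n, (ENNReal.ofReal (tNf K t (stN n m i) ^ (kNf n k i))
            * ∏ s ∈ range (MN n m i - 1),
                ENNReal.ofReal ((tNf K t (stN n m i + s + 1))⁻¹)) := by
      have h1 : ∏ j : Fin K, ENNReal.ofReal (t j ^ (Fkf n m k ↑j) * (t j)⁻¹)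
          = ∏ r ∈ range (stN n m n),
              ENNReal.ofReal (tNf K t r ^ (Fkf n m k r) * (tNf K t r)⁻¹) := by
        rw [← hK, ← Fin.prod_univ_eq_prod_range
          (fun r => ENNReal.ofReal (tNf K t r ^ (Fkf n m k r) * (tNf K t r)⁻¹)) K]
        refine Finset.prod_congr rfl fun j _ => ?_
        congr 2 <;> (unfold tNf; rw [dif_pos j.2])
      rw [h1, prod_mono_split n m hm k (tNf K t)
        (fun r hr => (htval t ht r (by omega)).1)]
    rw [hG]
    have hL : ∀ i : Fin n, ENNReal.ofReal
          (tNf K t (stN n m (↑i : ℕ)) ^ (k i) * ((ANf n a ↑i)⁻¹) ^ (k i + 1))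
        = ENNReal.ofReal ((a i)⁻¹ ^ (k i + 1))
            * ENNReal.ofReal (tNf K t (stN n m ↑i) ^ (kNf n k ↑i)) := by
      intro i
      rw [ANf_coe, kNf_coe,
        ENNReal.ofReal_mul (pow_nonneg (htval t ht _ (hst0 ↑i i.2)).1.le _), mul_comm]
    calc ∏ i : Fin n, (ENNReal.ofReal
          (tNf K t (stN n m (↑i:ℕ)) ^ (k i) * ((ANf n a ↑i)⁻¹) ^ (k i + 1))
          * ∏ s ∈ range (MN n m ↑i - 1),
              ENNReal.ofReal ((tNf K t (stN n m ↑i + s + 1))⁻¹))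
        = ∏ i : Fin n, (ENNReal.ofReal ((a i)⁻¹ ^ (k i + 1))
            * (ENNReal.ofReal (tNf K t (stN n m ↑i) ^ (kNf n k ↑i))
              * ∏ s ∈ range (MN n m ↑i - 1),
                  ENNReal.ofReal ((tNf K t (stN n m ↑i + s + 1))⁻¹))) := by
          refine Finset.prod_congr rfl fun i _ => ?_
          rw [hL i, mul_assoc]
      _ = (∏ i : Fin n, ENNReal.ofReal ((a i)⁻¹ ^ (k i + 1)))
            * ∏ i : Fin n, (ENNReal.ofReal (tNf K t (stN n m ↑i) ^ (kNf n k ↑i))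
              * ∏ s ∈ range (MN n m ↑i - 1),
                  ENNReal.ofReal ((tNf K t (stN n m ↑i + s + 1))⁻¹)) :=
          Finset.prod_mul_distrib
      _ = (∏ i : Fin n, ENNReal.ofReal ((a i)⁻¹ ^ (k i + 1)))
            * ∏ i ∈ range n, (ENNReal.ofReal (tNf K t (stN n m i) ^ (kNf n k i))
              * ∏ s ∈ range (MN n m i - 1),
                  ENNReal.ofReal ((tNf K t (stN n m i + s + 1))⁻¹)) := by
          rw [Fin.prod_univ_eq_prod_range (fun i =>
            ENNReal.ofReal (tNf K t (stN n m i) ^ (kNf n k i))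
              * ∏ s ∈ range (MN n m i - 1),
                  ENNReal.ofReal ((tNf K t (stN n m i + s + 1))⁻¹)) n]
  -- integral computation
  have hGmeas : ∀ k : Fin n → ℕ, Measurable (fun t : Fin K → ℝ =>
      ∏ j : Fin K, ENNReal.ofReal (t j ^ (Fkf n m k ↑j) * (t j)⁻¹)) :=
    fun k => measurable_mono_integrand (Fkf n m k)
  have hhyp : ∀ k : Fin n → ℕ, ∀ r < K, 0 < ∑ l ∈ range (r+1), Fkf n m k l := by
    intro k r hr
    have hn : 0 < n := by
      by_contra h
      have hn0 : n = 0 := by omega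
      subst hn0
      have hK0 : K = 0 := by rw [hK]; rfl
      omega
    rw [Fkf_partial]
    refine Finset.sum_pos' (fun i _ => by positivity) ⟨0, Finset.mem_range.mpr hn, ?_⟩
    have h0 : stN n m 0 = 0 := rfl
    rw [if_pos (by rw [h0]; omega)]
    omega
  have hGint : ∀ k : Fin n → ℕ,
      ∫⁻ t in S, ∏ j : Fin K, ENNReal.ofReal (t j ^ (Fkf n m k ↑j) * (t j)⁻¹)
        = ∏ i : Fin n, (((∑ i' ∈ range (↑i+1), (kNf n k i' + 1) : ℕ) : ℝ≥0∞))⁻¹ ^ (m i) := by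
    intro k
    rw [hSdef, simplex_lintegral K (Fkf n m k) (hhyp k) 1 one_pos]
    rw [ENNReal.ofReal_one, one_pow, one_mul]
    rw [show range K = range (stN n m n) from by rw [hK]]
    rw [block_prod_st n m (fun r => ((∑ l ∈ range (r+1), Fkf n m k l : ℕ) : ℝ≥0∞)⁻¹)]
    rw [← Fin.prod_univ_eq_prod_range (fun i => ∏ s ∈ range (MN n m i),
      ((∑ l ∈ range (stN n m i + s + 1), Fkf n m k l : ℕ) : ℝ≥0∞)⁻¹) n]
    refine Finset.prod_congr rfl fun i _ => ?_
    have hcongr : ∀ s ∈ range (MN n m ↑i),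
        ((∑ l ∈ range (stN n m ↑i + s + 1), Fkf n m k l : ℕ) : ℝ≥0∞)⁻¹
          = ((∑ i' ∈ range (↑i+1), (kNf n k i' + 1) : ℕ) : ℝ≥0∞)⁻¹ := by
      intro s hs
      rw [Fkf_partial_block n m hm k i.2 (Finset.mem_range.mp hs)]
    rw [Finset.prod_congr rfl hcongr, Finset.prod_const, Finset.card_range, MN_coe]
  set T : ℝ≥0∞ := ∫⁻ t in S, ENNReal.ofReal ((-1:ℝ)^n * ∏ j : Fin K, (t j - b j)⁻¹)
    with hTdef
  have hTsum : T = ∑' k : Fin n → ℕ,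
      ((∏ i : Fin n, ENNReal.ofReal ((a i)⁻¹ ^ (k i + 1)))
        * ∏ i : Fin n, (((∑ i' ∈ range (↑i+1), (kNf n k i' + 1) : ℕ) : ℝ≥0∞))⁻¹ ^ (m i)) := by
    rw [hTdef, setLIntegral_congr_fun hSmeas hpt]
    rw [lintegral_tsum (fun k => (((hGmeas k).const_mul _).aemeasurable))]
    refine tsum_congr fun k => ?_
    rw [lintegral_const_mul _ (hGmeas k), hGint k]
  have hkapval : ∀ (k : Fin n → ℕ) (i : Fin n),
      ((accEquiv n) k).1 i = ∑ i' ∈ range (↑i+1), (kNf n k i' + 1) := by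
    intro k i
    show (∑ l ∈ Finset.Iic i, (k l + 1)) = _
    exact sum_Iic_fin (fun l => k l + 1) (fun i' => kNf n k i' + 1)
      (fun l => by show kNf n k ↑l + 1 = k l + 1; rw [kNf_coe]) i
  have hcpos' : ∀ (k : Fin n → ℕ) (i : Fin n), 0 < ((accEquiv n) k).1 i :=
    fun k => ((accEquiv n) k).2.2
  have hterm : ∀ k : Fin n → ℕ,
      ((∏ i : Fin n, ENNReal.ofReal ((a i)⁻¹ ^ (k i + 1)))
        * ∏ i : Fin n, (((∑ i' ∈ range (↑i+1), (kNf n k i' + 1) : ℕ) : ℝ≥0∞))⁻¹ ^ (m i))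
      = ENNReal.ofReal
          (∏ i, x i ^ (((accEquiv n) k).1 i) / ((((accEquiv n) k).1 i : ℝ)) ^ (m i)) := by
    intro k
    have hC : (∏ i : Fin n, ENNReal.ofReal ((a i)⁻¹ ^ (k i + 1)))
        = ENNReal.ofReal (∏ i, x i ^ (((accEquiv n) k).1 i)) := by
      rw [← ENNReal.ofReal_prod_of_nonneg
        (fun i _ => pow_nonneg (inv_nonneg.mpr (ha0 i).le) _)]
      congr 1
      calc ∏ i, (a i)⁻¹ ^ (k i + 1)
          = ∏ i, ∏ l ∈ Finset.Ici i, x l ^ (k i + 1) := by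
            refine Finset.prod_congr rfl fun i _ => ?_
            rw [hainv i, ← Finset.prod_pow]
        _ = ∏ l : Fin n, ∏ i ∈ Finset.Iic l, x l ^ (k i + 1) :=
            Finset.prod_comm' (by
              intro i l
              simp only [Finset.mem_univ, Finset.mem_Ici, Finset.mem_Iic, true_and, and_true])
        _ = ∏ l : Fin n, x l ^ (∑ i ∈ Finset.Iic l, (k i + 1)) := by
            refine Finset.prod_congr rfl fun l _ => Finset.prod_pow_eq_pow_sum _ _ _
        _ = ∏ l, x l ^ (((accEquiv n) k).1 l) := rfl
    have hD : ∀ i : Fin n, (((∑ i' ∈ range (↑i+1), (kNf n k i' + 1) : ℕ) : ℝ≥0∞))⁻¹ ^ (m i)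
        = ENNReal.ofReal (((((accEquiv n) k).1 i : ℝ)) ^ (m i))⁻¹ := by
      intro i
      rw [← hkapval k i, ← ENNReal.ofReal_natCast (((accEquiv n) k).1 i),
        ← ENNReal.ofReal_inv_of_pos (by exact_mod_cast hcpos' k i),
        ← ENNReal.ofReal_pow (inv_nonneg.mpr (Nat.cast_nonneg _)), inv_pow]
    rw [hC, Finset.prod_congr rfl (fun i _ => hD i)]
    rw [← ENNReal.ofReal_prod_of_nonneg
      (fun i _ => inv_nonneg.mpr (pow_nonneg (Nat.cast_nonneg _) _))]
    rw [← ENNReal.ofReal_mul (Finset.prod_nonneg fun i _ =>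
      pow_nonneg (hx0 i).le _)]
    congr 1
    rw [← Finset.prod_mul_distrib]
    exact Finset.prod_congr rfl fun i _ => (div_eq_mul_inv _ _)
  have hTval : T = ∑' c : {c : Fin n → ℕ // StrictMono c ∧ ∀ i, 0 < c i},
      ENNReal.ofReal (∏ i, x i ^ (c.1 i) / ((c.1 i : ℝ)) ^ (m i)) := by
    rw [hTsum, tsum_congr hterm]
    exact (accEquiv n).tsum_eq
      (fun c => ENNReal.ofReal (∏ i, x i ^ (c.1 i) / ((c.1 i : ℝ)) ^ (m i)))
  have hfin : T ≠ ⊤ := by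
    rw [hTsum]
    have hle : (∑' k : Fin n → ℕ,
        ((∏ i : Fin n, ENNReal.ofReal ((a i)⁻¹ ^ (k i + 1)))
          * ∏ i : Fin n, (((∑ i' ∈ range (↑i+1), (kNf n k i' + 1) : ℕ) : ℝ≥0∞))⁻¹ ^ (m i)))
        ≤ ∑' k : Fin n → ℕ, ∏ i : Fin n, ENNReal.ofReal ((a i)⁻¹ ^ (k i + 1)) := by
      refine ENNReal.tsum_le_tsum fun k => ?_
      conv_rhs => rw [← mul_one (∏ i : Fin n, ENNReal.ofReal ((a i)⁻¹ ^ (k i + 1)))]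
      refine mul_le_mul' le_rfl (Finset.prod_le_one (fun i _ => zero_le) fun i _ => ?_)
      refine pow_le_one' (ENNReal.inv_le_one.mpr ?_) _
      have hge : 1 ≤ ∑ i' ∈ range (↑i+1), (kNf n k i' + 1) := by
        have h5 : kNf n k 0 + 1 ≤ ∑ i' ∈ range (↑i+1), (kNf n k i' + 1) :=
          Finset.single_le_sum (f := fun i' => kNf n k i' + 1)
            (fun i' _ => by positivity) (Finset.mem_range.mpr (Nat.succ_pos _))
        omega
      exact_mod_cast hge
    refine ne_top_of_le_ne_top ?_ hle
    rw [← prod_tsum_ennreal n (fun i κ => ENNReal.ofReal ((a i)⁻¹ ^ (κ + 1)))]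
    refine (ENNReal.prod_lt_top fun i _ => ?_).ne
    have hy : ENNReal.ofReal ((a i)⁻¹) < 1 :=
      ENNReal.ofReal_lt_one.mpr (inv_lt_one_of_one_lt₀ (ha1 i))
    have hexp : ∀ κ : ℕ, ENNReal.ofReal ((a i)⁻¹ ^ (κ + 1))
        = ENNReal.ofReal ((a i)⁻¹) * ENNReal.ofReal ((a i)⁻¹) ^ κ := by
      intro κ
      rw [ENNReal.ofReal_pow (inv_nonneg.mpr (ha0 i).le), pow_succ']
    calc ∑' κ : ℕ, ENNReal.ofReal ((a i)⁻¹ ^ (κ + 1))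
        = ∑' κ : ℕ, ENNReal.ofReal ((a i)⁻¹) * ENNReal.ofReal ((a i)⁻¹) ^ κ :=
          tsum_congr hexp
      _ = ENNReal.ofReal ((a i)⁻¹) * ∑' κ : ℕ, ENNReal.ofReal ((a i)⁻¹) ^ κ :=
          ENNReal.tsum_mul_left
      _ = ENNReal.ofReal ((a i)⁻¹) * (1 - ENNReal.ofReal ((a i)⁻¹))⁻¹ := by
          rw [ENNReal.tsum_geometric]
      _ < ⊤ := ENNReal.mul_lt_top (hy.trans_le le_top)
          (ENNReal.inv_lt_top.mpr (tsub_pos_of_lt hy))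
  have hnn : ∀ c : {c : Fin n → ℕ // StrictMono c ∧ ∀ i, 0 < c i},
      0 ≤ ∏ i, x i ^ (c.1 i) / ((c.1 i : ℝ)) ^ (m i) :=
    fun c => Finset.prod_nonneg fun i _ =>
      div_nonneg (pow_nonneg (hx0 i).le _) (pow_nonneg (Nat.cast_nonneg _) _)
  have hsummable : Summable (fun c : {c : Fin n → ℕ // StrictMono c ∧ ∀ i, 0 < c i} =>
      ∏ i, x i ^ (c.1 i) / ((c.1 i : ℝ)) ^ (m i)) := by
    have h1 := ENNReal.summable_toReal (by rw [← hTval]; exact hfin)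
    exact h1.congr fun c => ENNReal.toReal_ofReal (hnn c)
  have hLi : multiPolylogReal n m x = T.toReal := by
    rw [hTval]
    show (∑' c : {c : Fin n → ℕ // StrictMono c ∧ ∀ i, 0 < c i},
      ∏ i, x i ^ (c.1 i) / ((c.1 i : ℝ)) ^ (m i)) = _
    rw [← ENNReal.ofReal_tsum_of_nonneg hnn hsummable,
      ENNReal.toReal_ofReal (tsum_nonneg hnn)]
  have hfmeas : Measurable (fun t : Fin K → ℝ => ∏ j, (t j - b j)⁻¹) :=
    Finset.measurable_prod _ fun j _ => ((measurable_pi_apply j).sub measurable_const).inv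
  have hTabs : ∫⁻ t in S, ENNReal.ofReal ‖∏ j : Fin K, (t j - b j)⁻¹‖ = T := by
    rw [hTdef]
    refine setLIntegral_congr_fun hSmeas (fun t ht => ?_)
    congr 1
    rw [Real.norm_eq_abs]
    rw [show |∏ j : Fin K, (t j - b j)⁻¹| = |(-1:ℝ)^n * ∏ j : Fin K, (t j - b j)⁻¹| from by
      rw [abs_mul, abs_pow, abs_neg, abs_one, one_pow, one_mul]]
    exact abs_of_nonneg (hsign t ht)
  constructor
  · refine ⟨hfmeas.aestronglyMeasurable, ?_⟩
    rw [hasFiniteIntegral_iff_norm, hTabs]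
    exact hfin.lt_top
  · have h2 : ∫ t in S, ((-1:ℝ)^n * ∏ j : Fin K, (t j - b j)⁻¹) = T.toReal := by
      rw [integral_eq_lintegral_of_nonneg_ae ((ae_restrict_iff' hSmeas).2 (ae_of_all _ hsign))
        ((measurable_const.mul hfmeas).aestronglyMeasurable), hTdef]
    have h3 : ∫ t in S, ∏ j : Fin K, (t j - b j)⁻¹ = (-1:ℝ)^n * T.toReal := by
      rw [← h2, ← integral_const_mul]
      refine integral_congr_ae (ae_of_all _ fun t => ?_)
      show ∏ j : Fin K, (t j - b j)⁻¹
        = (-1:ℝ)^n * ((-1:ℝ)^n * ∏ j : Fin K, (t j - b j)⁻¹)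
      rw [← mul_assoc, ← pow_add, Even.neg_one_pow (Even.add_self n), one_mul]
    rw [hLi, h3, ← mul_assoc, ← pow_add, Even.neg_one_pow (Even.add_self n), one_mul]
end

section
/- (Shuffle relation for iterated integrals.) Let a ≤ b be real numbers, r, s ≥ 1, and let f_1,…,f_{r+s} : ℝ → ℂ be functions integrable on [a,b]. Then I(a,b; f_1,…,f_r) · I(a,b; f_{r+1},…,f_{r+s}) = Σ_σ I(a,b; f_{σ(1)},…,f_{σ(r+s)}), where σ ranges over all shuffles of type (r,s), i.e. permutations σ of {1,…,r+s} such that σ^{-1}(1) < σ^{-1}(2) < ⋯ < σ^{-1}(r) and σ^{-1}(r+1) < σ^{-1}(r+2) < ⋯ < σ^{-1}(r+s). -/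
open MeasureTheory

/-- The iterated integral `I(a,b; f₁,…,f_r) = ∫_{a<t₁<⋯<t_r<b} f₁(t₁)⋯f_r(t_r) dt₁⋯dt_r`
over the open simplex `{a < t₁ < ⋯ < t_r < b} ⊂ ℝ^r`; for `r = 0` it equals `1`. -/
noncomputable def iterInt (a b : ℝ) (r : ℕ) (f : Fin r → ℝ → ℂ) : ℂ :=
  ∫ t in {t : Fin r → ℝ | StrictMono t ∧ ∀ i, t i ∈ Set.Ioo a b}, ∏ i, f i (t i)

/-- A permutation `σ` of `Fin (r+s)` is a shuffle of type `(r,s)` if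
`σ⁻¹(1) < ⋯ < σ⁻¹(r)` and `σ⁻¹(r+1) < ⋯ < σ⁻¹(r+s)`. -/
def IsShuffle (r s : ℕ) (σ : Equiv.Perm (Fin (r + s))) : Prop :=
  (∀ i j : Fin (r + s), (i : ℕ) < r → (j : ℕ) < r → i < j → σ.symm i < σ.symm j) ∧
    (∀ i j : Fin (r + s), r ≤ (i : ℕ) → r ≤ (j : ℕ) → i < j → σ.symm i < σ.symm j)

instance (r s : ℕ) (σ : Equiv.Perm (Fin (r + s))) : Decidable (IsShuffle r s σ) :=
  inferInstanceAs (Decidable (_ ∧ _))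

section Aux

/-- The set of tuples `u` with `u ∘ σ` strictly monotone is measurable. -/
lemma measurableSet_strictMonoComp (n : ℕ) (σ : Equiv.Perm (Fin n)) :
    MeasurableSet {u : Fin n → ℝ | StrictMono (u ∘ σ)} := by
  have h : {u : Fin n → ℝ | StrictMono (u ∘ σ)} =
      ⋂ (i : Fin n) (j : Fin n) (_ : i < j), {u : Fin n → ℝ | u (σ i) < u (σ j)} := by
    ext u
    simp only [Set.mem_setOf_eq, Set.mem_iInter]
    exact ⟨fun h i j hij => h hij, fun h i j hij => h i j hij⟩
  rw [h]
  exact MeasurableSet.iInter fun i => MeasurableSet.iInter fun j => MeasurableSet.iInter fun _ =>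
    measurableSet_lt (measurable_pi_apply _) (measurable_pi_apply _)

lemma measurableSet_box (n : ℕ) (a b : ℝ) :
    MeasurableSet {u : Fin n → ℝ | ∀ i, u i ∈ Set.Ioo a b} := by
  have h : {u : Fin n → ℝ | ∀ i, u i ∈ Set.Ioo a b} =
      Set.pi Set.univ (fun _ : Fin n => Set.Ioo a b) := by
    ext u; simp [Set.mem_pi]
  rw [h]
  exact MeasurableSet.univ_pi fun _ => measurableSet_Ioo

lemma measurableSet_simplex (n : ℕ) (a b : ℝ) :
    MeasurableSet {u : Fin n → ℝ | StrictMono u ∧ ∀ i, u i ∈ Set.Ioo a b} := by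
  have h : {u : Fin n → ℝ | StrictMono u ∧ ∀ i, u i ∈ Set.Ioo a b} =
      {u : Fin n → ℝ | StrictMono (u ∘ (1 : Equiv.Perm (Fin n)))} ∩
        {u : Fin n → ℝ | ∀ i, u i ∈ Set.Ioo a b} := by
    ext u
    simp only [Set.mem_setOf_eq, Set.mem_inter_iff, Equiv.Perm.coe_one, Function.comp_id]
  rw [h]
  exact (measurableSet_strictMonoComp n 1).inter (measurableSet_box n a b)

lemma measurableSet_Bset (n : ℕ) (a b : ℝ) (σ : Equiv.Perm (Fin n)) :
    MeasurableSet {u : Fin n → ℝ | StrictMono (u ∘ σ) ∧ ∀ i, u i ∈ Set.Ioo a b} :=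
  ((measurableSet_strictMonoComp n σ).inter (measurableSet_box n a b))

lemma null_eq_coords (n : ℕ) (i j : Fin n) (hij : i ≠ j) :
    volume {u : Fin n → ℝ | u i = u j} = 0 := by
  set L : (Fin n → ℝ) →ₗ[ℝ] ℝ :=
    (LinearMap.proj i : (Fin n → ℝ) →ₗ[ℝ] ℝ) - (LinearMap.proj j : (Fin n → ℝ) →ₗ[ℝ] ℝ) with hL
  have hker : {u : Fin n → ℝ | u i = u j} = (LinearMap.ker L : Set (Fin n → ℝ)) := by
    ext u
    simp only [Set.mem_setOf_eq, SetLike.mem_coe, LinearMap.mem_ker, hL, LinearMap.sub_apply,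
      LinearMap.proj_apply, sub_eq_zero]
  rw [hker]
  apply Measure.addHaar_submodule
  intro htop
  have h1 : L (Pi.single i (1 : ℝ)) = 0 := by
    have hm : Pi.single i (1 : ℝ) ∈ LinearMap.ker L := htop ▸ Submodule.mem_top
    exact LinearMap.mem_ker.mp hm
  simp only [hL, LinearMap.sub_apply, LinearMap.proj_apply] at h1
  rw [Pi.single_eq_same, Pi.single_eq_of_ne hij.symm] at h1
  norm_num at h1

lemma null_noninj (n : ℕ) :
    volume {u : Fin n → ℝ | ¬ Function.Injective u} = 0 := by
  have hsub : {u : Fin n → ℝ | ¬ Function.Injective u} ⊆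
      ⋃ (p : Fin n × Fin n) (_ : p.1 ≠ p.2), {u : Fin n → ℝ | u p.1 = u p.2} := by
    intro u hu
    rw [Set.mem_setOf_eq, Function.not_injective_iff] at hu
    obtain ⟨i, j, h1, h2⟩ := hu
    exact Set.mem_iUnion.mpr ⟨(i, j), Set.mem_iUnion.mpr ⟨h2, h1⟩⟩
  refine measure_mono_null hsub ?_
  exact measure_iUnion_null fun p => measure_iUnion_null fun hp => null_eq_coords n p.1 p.2 hp

end Aux

/-- shuffle relation: for `a ≤ b`, `r, s ≥ 1` and `f₁,…,f_{r+s}` integrable on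
`[a,b]`, `I(a,b; f₁,…,f_r) · I(a,b; f_{r+1},…,f_{r+s}) = ∑_σ I(a,b; f_{σ(1)},…,f_{σ(r+s)})`
where `σ` ranges over all shuffles of type `(r,s)`. -/
theorem iterInt_shuffle (a b : ℝ) (hab : a ≤ b) (r s : ℕ) (hr : 1 ≤ r) (hs : 1 ≤ s)
    (f : Fin (r + s) → ℝ → ℂ) (hf : ∀ i, IntegrableOn (f i) (Set.Icc a b)) :
    iterInt a b r (fun i => f (Fin.castAdd s i)) * iterInt a b s (fun i => f (Fin.natAdd r i))
      = ∑ σ ∈ Finset.univ.filter (IsShuffle r s),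
          iterInt a b (r + s) (fun i => f (σ i)) := by
  classical
  -- replace `f i` by its indicator on `[a,b]`, which is globally integrable
  set F : Fin (r + s) → ℝ → ℂ := fun i => (Set.Icc a b).indicator (f i) with hFdef
  have hFint : ∀ i, Integrable (F i) := fun i =>
    (integrable_indicator_iff measurableSet_Icc).mpr (hf i)
  have hFeq : ∀ (i : Fin (r + s)) (x : ℝ), x ∈ Set.Ioo a b → F i x = f i x := fun i x hx =>
    Set.indicator_of_mem (Set.mem_Icc_of_Ioo hx) (f i)
  set g : (Fin (r + s) → ℝ) → ℂ := fun u => ∏ i, F i (u i) with hgdef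
  have hgint : Integrable g := Integrable.fintype_prod hFint
  -- the sets
  set B : Equiv.Perm (Fin (r + s)) → Set (Fin (r + s) → ℝ) := fun σ =>
    {u | StrictMono (u ∘ σ) ∧ ∀ i, u i ∈ Set.Ioo a b} with hBdef
  set A : Set (Fin (r + s) → ℝ) :=
    {u | StrictMono (u ∘ Fin.castAdd s) ∧ StrictMono (u ∘ Fin.natAdd r) ∧
      ∀ i, u i ∈ Set.Ioo a b} with hAdef
  -- Step 1 : each shuffled iterated integral is the integral of `g` over `B σ`.
  have step1 : ∀ σ : Equiv.Perm (Fin (r + s)),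
      iterInt a b (r + s) (fun i => f (σ i)) = ∫ u in B σ, g u := by
    intro σ
    set e : (Fin (r + s) → ℝ) ≃ᵐ (Fin (r + s) → ℝ) :=
      MeasurableEquiv.piCongrLeft (fun _ => ℝ) σ with hedef
    have he : ∀ (t : Fin (r + s) → ℝ) (j : Fin (r + s)), e t j = t (σ.symm j) := by
      intro t j
      have h := Equiv.piCongrLeft_apply_apply (fun _ : Fin (r + s) => ℝ) σ t (σ.symm j)
      rw [Equiv.apply_symm_apply] at h
      exact h
    have hmp : MeasurePreserving e volume volume :=
      volume_measurePreserving_piCongrLeft (fun _ => ℝ) σ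
    have hpre : e ⁻¹' (B σ) =
        {t : Fin (r + s) → ℝ | StrictMono t ∧ ∀ i, t i ∈ Set.Ioo a b} := by
      ext t
      simp only [Set.mem_preimage, hBdef, Set.mem_setOf_eq]
      constructor
      · rintro ⟨h1, h2⟩
        have hst : StrictMono t := by
          have : (e t) ∘ σ = t := by
            funext i; simp [he, Function.comp]
          rwa [this] at h1
        refine ⟨hst, fun i => ?_⟩
        have := h2 (σ i)
        rwa [he, Equiv.symm_apply_apply] at this
      · rintro ⟨h1, h2⟩
        constructor
        · have : (e t) ∘ σ = t := by funext i; simp [he, Function.comp]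
          rwa [this]
        · intro i; rw [he]; exact h2 _
    have hcomp : ∀ t ∈ {t : Fin (r + s) → ℝ | StrictMono t ∧ ∀ i, t i ∈ Set.Ioo a b},
        g (e t) = ∏ i, f (σ i) (t i) := by
      intro t ht
      have h1 : g (e t) = ∏ j, F j (t (σ.symm j)) := by
        simp only [hgdef]
        exact Finset.prod_congr rfl fun j _ => by rw [he]
      rw [h1]
      rw [← Equiv.prod_comp σ (fun j => F j (t (σ.symm j)))]
      refine Finset.prod_congr rfl fun i _ => ?_
      rw [Equiv.symm_apply_apply]
      exact hFeq (σ i) (t i) (ht.2 i)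
    calc iterInt a b (r + s) (fun i => f (σ i))
        = ∫ t in {t : Fin (r + s) → ℝ | StrictMono t ∧ ∀ i, t i ∈ Set.Ioo a b},
            g (e t) := by
          rw [iterInt]
          exact (setIntegral_congr_fun (measurableSet_simplex (r + s) a b)
            (fun t ht => (hcomp t ht))).symm
      _ = ∫ t in e ⁻¹' (B σ), g (e t) := by rw [hpre]
      _ = ∫ u in B σ, g u :=
          hmp.setIntegral_preimage_emb (MeasurableEquiv.measurableEmbedding e) g (B σ)
  -- Step 2 : the left-hand side is the integral of `g` over `A`.
  have step2 : iterInt a b r (fun i => f (Fin.castAdd s i)) *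
      iterInt a b s (fun i => f (Fin.natAdd r i)) = ∫ u in A, g u := by
    set E : (Fin (r + s) → ℝ) ≃ᵐ (Fin r → ℝ) × (Fin s → ℝ) :=
      (MeasurableEquiv.piCongrLeft (fun _ => ℝ) finSumFinEquiv).symm.trans
        (MeasurableEquiv.sumPiEquivProdPi fun _ => ℝ) with hEdef
    have hE1 : ∀ (u : Fin (r + s) → ℝ) (i : Fin r), (E u).1 i = u (Fin.castAdd s i) := by
      intro u i
      simp only [hEdef, MeasurableEquiv.trans_apply]
      rw [show (MeasurableEquiv.piCongrLeft (fun _ : Fin (r+s) => ℝ) finSumFinEquiv).symm u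
          = fun x => u (finSumFinEquiv x) from rfl]
      simp [MeasurableEquiv.sumPiEquivProdPi, Equiv.sumPiEquivProdPi]
    have hE2 : ∀ (u : Fin (r + s) → ℝ) (i : Fin s), (E u).2 i = u (Fin.natAdd r i) := by
      intro u i
      simp only [hEdef, MeasurableEquiv.trans_apply]
      rw [show (MeasurableEquiv.piCongrLeft (fun _ : Fin (r+s) => ℝ) finSumFinEquiv).symm u
          = fun x => u (finSumFinEquiv x) from rfl]
      simp [MeasurableEquiv.sumPiEquivProdPi, Equiv.sumPiEquivProdPi]
    have hmp : MeasurePreserving E volume volume :=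
      (volume_measurePreserving_sumPiEquivProdPi (fun _ : Fin r ⊕ Fin s => ℝ)).comp
        ((volume_measurePreserving_piCongrLeft (fun _ : Fin (r+s) => ℝ) finSumFinEquiv).symm
          (MeasurableEquiv.piCongrLeft (fun _ => ℝ) finSumFinEquiv))
    set Sr : Set (Fin r → ℝ) := {t | StrictMono t ∧ ∀ i, t i ∈ Set.Ioo a b} with hSr
    set Ss : Set (Fin s → ℝ) := {t | StrictMono t ∧ ∀ i, t i ∈ Set.Ioo a b} with hSs
    have hpre : E ⁻¹' (Sr ×ˢ Ss) = A := by
      ext u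
      simp only [Set.mem_preimage, Set.mem_prod, hSr, hSs, Set.mem_setOf_eq, hAdef]
      constructor
      · rintro ⟨⟨h1, h2⟩, h3, h4⟩
        have hc : (E u).1 = u ∘ Fin.castAdd s := by funext i; exact hE1 u i
        have hn : (E u).2 = u ∘ Fin.natAdd r := by funext i; exact hE2 u i
        refine ⟨hc ▸ h1, hn ▸ h3, fun i => ?_⟩
        refine Fin.addCases (fun i0 => ?_) (fun i0 => ?_) i
        · have := h2 i0; rwa [hE1] at this
        · have := h4 i0; rwa [hE2] at this
      · rintro ⟨h1, h2, h3⟩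
        have hc : (E u).1 = u ∘ Fin.castAdd s := by funext i; exact hE1 u i
        have hn : (E u).2 = u ∘ Fin.natAdd r := by funext i; exact hE2 u i
        exact ⟨⟨hc ▸ h1, fun i => hc ▸ h3 (Fin.castAdd s i)⟩,
          hn ▸ h2, fun i => hn ▸ h3 (Fin.natAdd r i)⟩
    have hcongr1 : iterInt a b r (fun i => f (Fin.castAdd s i)) =
        ∫ t in Sr, ∏ i, F (Fin.castAdd s i) (t i) := by
      rw [iterInt]
      apply setIntegral_congr_fun (measurableSet_simplex r a b)
      intro t ht
      exact Finset.prod_congr rfl fun i _ => (hFeq (Fin.castAdd s i) (t i) (ht.2 i)).symm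
    have hcongr2 : iterInt a b s (fun i => f (Fin.natAdd r i)) =
        ∫ t in Ss, ∏ i, F (Fin.natAdd r i) (t i) := by
      rw [iterInt]
      apply setIntegral_congr_fun (measurableSet_simplex s a b)
      intro t ht
      exact Finset.prod_congr rfl fun i _ => (hFeq (Fin.natAdd r i) (t i) (ht.2 i)).symm
    rw [hcongr1, hcongr2]
    have hprod : (∫ t in Sr, ∏ i, F (Fin.castAdd s i) (t i)) *
        ∫ t in Ss, ∏ i, F (Fin.natAdd r i) (t i)
        = ∫ z in Sr ×ˢ Ss, (∏ i, F (Fin.castAdd s i) (z.1 i)) *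
            ∏ i, F (Fin.natAdd r i) (z.2 i) := by
      rw [← setIntegral_prod_mul]
      rw [← Measure.volume_eq_prod]
    rw [hprod]
    have := hmp.setIntegral_preimage_emb (MeasurableEquiv.measurableEmbedding E)
      (fun z : (Fin r → ℝ) × (Fin s → ℝ) =>
        (∏ i, F (Fin.castAdd s i) (z.1 i)) * ∏ i, F (Fin.natAdd r i) (z.2 i)) (Sr ×ˢ Ss)
    rw [← this, hpre]
    refine setIntegral_congr_fun ?_ fun u _ => ?_
    · rw [← hpre]; exact E.measurable (((measurableSet_simplex r a b)).prod
        (measurableSet_simplex s a b))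
    · have h1 : (∏ i, F (Fin.castAdd s i) ((E u).1 i)) = ∏ i, F (Fin.castAdd s i)
          (u (Fin.castAdd s i)) := Finset.prod_congr rfl fun i _ => by rw [hE1]
      have h2 : (∏ i, F (Fin.natAdd r i) ((E u).2 i)) = ∏ i, F (Fin.natAdd r i)
          (u (Fin.natAdd r i)) := Finset.prod_congr rfl fun i _ => by rw [hE2]
      rw [h1, h2, hgdef]
      exact (Fin.prod_univ_add (f := fun k => F k (u k))).symm
  -- Step 3 : the `B σ` for shuffles `σ` are pairwise disjoint and cover `A` a.e.
  have hdisj : Set.Pairwise (↑(Finset.univ.filter (IsShuffle r s)) :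
      Set (Equiv.Perm (Fin (r + s)))) (Function.onFun Disjoint B) := by
    intro σ _ τ _ hστ
    rw [Function.onFun, Set.disjoint_left]
    rintro u ⟨hσ1, hσ2⟩ ⟨hτ1, _⟩
    apply hστ
    have hrange : Set.range (u ∘ σ) = Set.range (u ∘ τ) := by
      rw [Set.range_comp, Set.range_comp, Equiv.range_eq_univ, Equiv.range_eq_univ]
    haveI : WellFoundedLT (Fin (r + s)) := inferInstance
    have heq : u ∘ σ = u ∘ τ := (hσ1.range_inj hτ1).mp hrange
    have hinj : Function.Injective u := by
      intro x y hxy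
      have h := hσ1.injective (a₁ := σ.symm x) (a₂ := σ.symm y)
        (by simpa using hxy)
      exact σ.symm.injective h
    apply Equiv.ext
    intro i
    exact hinj (congrFun heq i)
  have hBsubA : ∀ σ ∈ Finset.univ.filter (IsShuffle r s), B σ ⊆ A := by
    intro σ hσ
    rw [Finset.mem_filter] at hσ
    obtain ⟨_, hsh1, hsh2⟩ := hσ
    rintro u ⟨h1, h2⟩
    have key : ∀ i j : Fin (r + s), σ.symm i < σ.symm j → u i < u j := by
      intro i j hij
      have := h1 hij
      simpa using this
    refine ⟨?_, ?_, h2⟩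
    · intro i j hij
      apply key
      exact hsh1 _ _ (by simpa using i.isLt) (by simpa using j.isLt)
        (by simp only [Fin.lt_def, Fin.coe_castAdd]; exact hij)
    · intro i j hij
      apply key
      refine hsh2 _ _ (by simp) (by simp) ?_
      simp only [Fin.lt_def, Fin.coe_natAdd]
      simp only [Fin.lt_def] at hij
      omega
  have hAsub : A \ (⋃ σ ∈ Finset.univ.filter (IsShuffle r s), B σ) ⊆
      {u : Fin (r + s) → ℝ | ¬ Function.Injective u} := by
    rintro u ⟨hA, hU⟩
    by_contra hinj
    simp only [Set.mem_setOf_eq, not_not] at hinj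
    apply hU
    obtain ⟨h1, h2, h3⟩ := hA
    set σ := Tuple.sort u with hσdef
    have hmono : Monotone (u ∘ σ) := Tuple.monotone_sort u
    have hsm : StrictMono (u ∘ σ) :=
      hmono.strictMono_of_injective (hinj.comp σ.injective)
    have hlt : ∀ i j : Fin (r + s), u i < u j → σ.symm i < σ.symm j := by
      intro i j hij
      have h : (u ∘ σ) (σ.symm i) < (u ∘ σ) (σ.symm j) := by
        simpa using hij
      exact hsm.lt_iff_lt.mp h
    have hshuffle : IsShuffle r s σ := by
      constructor
      · intro i j hi hj hij
        apply hlt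
        have : u (Fin.castAdd s ⟨i, hi⟩) < u (Fin.castAdd s ⟨j, hj⟩) := by
          apply h1
          exact Fin.lt_def.mpr (Fin.lt_def.mp hij)
        have hieq : Fin.castAdd s ⟨(i : ℕ), hi⟩ = i := by ext; simp
        have hjeq : Fin.castAdd s ⟨(j : ℕ), hj⟩ = j := by ext; simp
        rwa [hieq, hjeq] at this
      · intro i j hi hj hij
        apply hlt
        have hi' : (i : ℕ) - r < s := by omega
        have hj' : (j : ℕ) - r < s := by omega
        have : u (Fin.natAdd r ⟨(i : ℕ) - r, hi'⟩) < u (Fin.natAdd r ⟨(j : ℕ) - r, hj'⟩) := by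
          apply h2
          simp only [Fin.lt_def] at hij ⊢
          omega
        have hieq : Fin.natAdd r ⟨(i : ℕ) - r, hi'⟩ = i := by
          ext; simp only [Fin.coe_natAdd]; omega
        have hjeq : Fin.natAdd r ⟨(j : ℕ) - r, hj'⟩ = j := by
          ext; simp only [Fin.coe_natAdd]; omega
        rwa [hieq, hjeq] at this
    refine Set.mem_biUnion (Finset.mem_filter.mpr ⟨Finset.mem_univ σ, hshuffle⟩) ?_
    refine ⟨?_, h3⟩
    intro i j hij
    exact hsm hij
  -- combine
  rw [step2]
  have hsum : ∑ σ ∈ Finset.univ.filter (IsShuffle r s), iterInt a b (r + s) (fun i => f (σ i))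
      = ∫ u in ⋃ σ ∈ Finset.univ.filter (IsShuffle r s), B σ, g u := by
    rw [integral_biUnion_finset _ (fun σ _ => measurableSet_Bset (r + s) a b σ) hdisj
      (fun σ _ => hgint.integrableOn)]
    exact Finset.sum_congr rfl fun σ _ => step1 σ
  rw [hsum]
  apply setIntegral_congr_set
  rw [MeasureTheory.ae_eq_set]
  constructor
  · exact measure_mono_null hAsub (null_noninj (r + s))
  · have : (⋃ σ ∈ Finset.univ.filter (IsShuffle r s), B σ) \ A = ∅ := by
      rw [Set.diff_eq_empty]
      exact Set.iUnion₂_subset hBsubA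
    rw [this]; exact measure_empty
end

section
/- For all real numbers x, y with 0 < x < 1 and 0 < y < 1, the function (t_1,t_2) ↦ (y/(1−t_1 y))·(x/(1−t_2 x)) + (2 t_1 x y/(1 − t_1^2 x y))·( y/(1−t_2 y) + 1/(t_2 (t_2 x − 1)) ) is integrable on the open simplex {0 < t_1 < t_2 < 1} ⊂ ℝ^2, and the double logarithm satisfies Li_{1,1}(x,y) = ∫_{0<t_1<t_2<1} [ (y/(1−t_1 y))·(x/(1−t_2 x)) + (2 t_1 x y/(1 − t_1^2 x y))·( y/(1−t_2 y) + 1/(t_2 (t_2 x − 1)) ) ] dt_1 dt_2. -/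
open MeasureTheory

open Set


noncomputable section
namespace DLog

def T : Set (ℝ × ℝ) := {p | 0 < p.1 ∧ p.1 < p.2 ∧ p.2 < 1}

lemma measT : MeasurableSet T := by
  apply MeasurableSet.inter (measurableSet_lt measurable_const measurable_fst)
  exact MeasurableSet.inter (measurableSet_lt measurable_fst measurable_snd)
    (measurableSet_lt measurable_snd measurable_const)

lemma measM (a b : ℕ) : Measurable (fun p : ℝ × ℝ => p.1 ^ a * p.2 ^ b / p.2) :=
  ((measurable_fst.pow_const a).mul (measurable_snd.pow_const b)).div measurable_snd

/-- value of monomial integral -/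
def V (a b : ℕ) : ℝ := 1 / (((a:ℝ) + 1) * ((a:ℝ) + (b:ℝ) + 1))

lemma V_nonneg (a b : ℕ) : 0 ≤ V a b := by
  apply div_nonneg zero_le_one
  positivity

lemma V_le_one (a b : ℕ) : V a b ≤ 1 := by
  rw [V, div_le_one (by positivity)]
  nlinarith [Nat.cast_nonneg (α := ℝ) a, Nat.cast_nonneg (α := ℝ) b]

lemma lint_mono (a b : ℕ) :
    ∫⁻ p in T, ENNReal.ofReal (p.1 ^ a * p.2 ^ b / p.2) = ENNReal.ofReal (V a b) := by
  have hmeas : Measurable fun p : ℝ × ℝ => T.indicator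
      (fun q : ℝ × ℝ => ENNReal.ofReal (q.1 ^ a * q.2 ^ b / q.2)) p :=
    ((measM a b).ennreal_ofReal).indicator measT
  rw [← lintegral_indicator measT]
  rw [Measure.volume_eq_prod, lintegral_prod_symm _ hmeas.aemeasurable]
  have inner : ∀ t2 : ℝ, (∫⁻ t1, T.indicator
      (fun q : ℝ × ℝ => ENNReal.ofReal (q.1 ^ a * q.2 ^ b / q.2)) (t1, t2)) =
      (Ioo (0:ℝ) 1).indicator (fun t2 => ENNReal.ofReal (t2 ^ (a + b) / ((a:ℝ)+1))) t2 := by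
    intro t2
    by_cases h2 : t2 ∈ Ioo (0:ℝ) 1
    · have hmem : ∀ t1 : ℝ, ((t1, t2) ∈ T) ↔ t1 ∈ Ioo 0 t2 := by
        intro t1; simp only [T, mem_setOf_eq, mem_Ioo]
        exact ⟨fun h => ⟨h.1, h.2.1⟩, fun h => ⟨h.1, h.2, h2.2⟩⟩
      have : (fun t1 : ℝ => T.indicator
          (fun q : ℝ × ℝ => ENNReal.ofReal (q.1 ^ a * q.2 ^ b / q.2)) (t1, t2)) =
          (Ioo (0:ℝ) t2).indicator (fun t1 => ENNReal.ofReal (t1 ^ a * t2 ^ b / t2)) := by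
        funext t1
        by_cases h : t1 ∈ Ioo 0 t2
        · rw [indicator_of_mem ((hmem t1).mpr h), indicator_of_mem h]
        · rw [indicator_of_notMem (fun hc => h ((hmem t1).mp hc)), indicator_of_notMem h]
      rw [this, lintegral_indicator measurableSet_Ioo, indicator_of_mem h2]
      have hint : IntegrableOn (fun t1 : ℝ => t1 ^ a * t2 ^ b / t2) (Ioo 0 t2) :=
        (((continuous_pow a).mul continuous_const).div_const _).integrableOn_Icc.mono_set
          Ioo_subset_Icc_self
      rw [← ofReal_integral_eq_lintegral_ofReal hint]
      · congr 1
        have : ∀ t1 : ℝ, t1 ^ a * t2 ^ b / t2 = t1 ^ a * (t2 ^ b / t2) := fun t1 => by ring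
        simp_rw [this]
        rw [MeasureTheory.integral_mul_const, ← integral_Ioc_eq_integral_Ioo,
          ← intervalIntegral.integral_of_le h2.1.le, integral_pow]
        have h20 : t2 ≠ 0 := ne_of_gt h2.1
        field_simp
        ring
      · filter_upwards [ae_restrict_mem measurableSet_Ioo] with t1 h1
        have ht2 : (0:ℝ) < t2 := h2.1
        have ht1 : (0:ℝ) < t1 := h1.1
        positivity
    · have : (fun t1 : ℝ => T.indicator
          (fun q : ℝ × ℝ => ENNReal.ofReal (q.1 ^ a * q.2 ^ b / q.2)) (t1, t2)) = fun _ => 0 := by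
        funext t1
        apply indicator_of_notMem
        intro hc
        exact h2 ⟨lt_trans hc.1 hc.2.1, hc.2.2⟩
      rw [this, lintegral_const, zero_mul, indicator_of_notMem h2]
  simp_rw [inner]
  rw [lintegral_indicator measurableSet_Ioo]
  have hint : IntegrableOn (fun t2 : ℝ => t2 ^ (a + b) / ((a:ℝ)+1)) (Ioo 0 1) :=
    ((continuous_pow _).div_const _).integrableOn_Icc.mono_set Ioo_subset_Icc_self
  rw [← ofReal_integral_eq_lintegral_ofReal hint]
  · congr 1
    simp_rw [div_eq_mul_inv]
    rw [MeasureTheory.integral_mul_const, ← integral_Ioc_eq_integral_Ioo,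
      ← intervalIntegral.integral_of_le zero_le_one, integral_pow]
    rw [V]
    push_cast
    field_simp
    ring
  · filter_upwards [ae_restrict_mem measurableSet_Ioo] with t2 h2
    have ht2 : (0:ℝ) < t2 := h2.1
    positivity


lemma M_ae_nonneg (a b : ℕ) :
    0 ≤ᵐ[volume.restrict T] fun p : ℝ × ℝ => p.1 ^ a * p.2 ^ b / p.2 := by
  filter_upwards [ae_restrict_mem measT] with p hp
  have h1 : (0:ℝ) < p.1 := hp.1
  have h2 : (0:ℝ) < p.2 := lt_trans hp.1 hp.2.1
  positivity

lemma intOn_mono (a b : ℕ) : IntegrableOn (fun p : ℝ × ℝ => p.1 ^ a * p.2 ^ b / p.2) T := by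
  refine ⟨(measM a b).aestronglyMeasurable, ?_⟩
  rw [HasFiniteIntegral]
  have : ∫⁻ p in T, ‖p.1 ^ a * p.2 ^ b / p.2‖ₑ = ENNReal.ofReal (V a b) := by
    rw [← lint_mono a b]
    apply lintegral_congr_ae
    filter_upwards [M_ae_nonneg a b] with p hp
    exact Real.enorm_eq_ofReal hp
  rw [this]
  exact ENNReal.ofReal_lt_top

lemma int_mono (a b : ℕ) : ∫ p in T, p.1 ^ a * p.2 ^ b / p.2 = V a b := by
  rw [integral_eq_lintegral_of_nonneg_ae (M_ae_nonneg a b) (measM a b).aestronglyMeasurable,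
    lint_mono a b, ENNReal.toReal_ofReal (V_nonneg a b)]

lemma intOn_cmono (c : ℝ) (a b : ℕ) :
    IntegrableOn (fun p : ℝ × ℝ => c * (p.1 ^ a * p.2 ^ b / p.2)) T :=
  (intOn_mono a b).const_mul c

lemma int_cmono (c : ℝ) (a b : ℕ) :
    ∫ p in T, c * (p.1 ^ a * p.2 ^ b / p.2) = c * V a b := by
  rw [integral_const_mul c _, int_mono a b]

lemma lint_norm_cmono (c : ℝ) (hc : 0 ≤ c) (a b : ℕ) :
    ∫⁻ p in T, ‖c * (p.1 ^ a * p.2 ^ b / p.2)‖ₑ = ENNReal.ofReal (c * V a b) := by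
  have : ∫⁻ p in T, ‖c * (p.1 ^ a * p.2 ^ b / p.2)‖ₑ =
      ∫⁻ p in T, ENNReal.ofReal c * ENNReal.ofReal (p.1 ^ a * p.2 ^ b / p.2) := by
    apply lintegral_congr_ae
    filter_upwards [M_ae_nonneg a b] with p hp
    rw [Real.enorm_eq_ofReal (mul_nonneg hc hp), ENNReal.ofReal_mul hc]
  rw [this, lintegral_const_mul' _ _ ENNReal.ofReal_ne_top, lint_mono a b,
    ← ENNReal.ofReal_mul hc]


lemma mono_le_one {p : ℝ × ℝ} (hp : p ∈ T) {a b : ℕ} (hab : 1 ≤ a + b) :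
    p.1 ^ a * p.2 ^ b / p.2 ≤ 1 := by
  obtain ⟨h1, h12, h2l⟩ := hp
  have h2 : (0:ℝ) < p.2 := h1.trans h12
  rw [div_le_one h2]
  calc p.1 ^ a * p.2 ^ b ≤ p.2 ^ a * p.2 ^ b := by
        exact mul_le_mul_of_nonneg_right (pow_le_pow_left₀ h1.le h12.le a) (by positivity)
    _ = p.2 ^ (a + b) := (pow_add _ _ _).symm
    _ ≤ p.2 ^ 1 := pow_le_pow_of_le_one h2.le h2l.le hab
    _ = p.2 := pow_one _

lemma integral_expand (coeff : ℕ × ℕ → ℝ) (hco : ∀ i, 0 ≤ coeff i) (ea eb : ℕ × ℕ → ℕ)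
    (hcs : Summable coeff) (hab : ∀ i, 1 ≤ ea i + eb i) (G : ℝ × ℝ → ℝ) (hGm : Measurable G)
    (hG : ∀ p ∈ T, G p = ∑' i : ℕ × ℕ, coeff i * (p.1 ^ ea i * p.2 ^ eb i / p.2)) :
    IntegrableOn G T ∧ ∫ p in T, G p = ∑' i, coeff i * V (ea i) (eb i) := by
  have hs : Summable fun i => coeff i * V (ea i) (eb i) :=
    hcs.of_nonneg_of_le (fun i => mul_nonneg (hco i) (V_nonneg _ _))
      (fun i => mul_le_of_le_one_right (hco i) (V_le_one _ _))
  have hps : ∀ p ∈ T, Summable fun i : ℕ × ℕ => coeff i * (p.1 ^ ea i * p.2 ^ eb i / p.2) := by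
    intro p hp
    apply hcs.of_nonneg_of_le
    · intro i
      have h1 : (0:ℝ) < p.1 := hp.1
      have h2 : (0:ℝ) < p.2 := lt_trans hp.1 hp.2.1
      have := hco i
      positivity
    · exact fun i => mul_le_of_le_one_right (hco i) (mono_le_one hp (hab i))
  have hterm_nonneg : ∀ p ∈ T, ∀ i : ℕ × ℕ,
      0 ≤ coeff i * (p.1 ^ ea i * p.2 ^ eb i / p.2) := by
    intro p hp i
    have h1 : (0:ℝ) < p.1 := hp.1
    have h2 : (0:ℝ) < p.2 := lt_trans hp.1 hp.2.1
    have := hco i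
    positivity
  have key : ∀ i : ℕ × ℕ, ∫⁻ p in T, ‖coeff i * (p.1 ^ ea i * p.2 ^ eb i / p.2)‖ₑ =
      ENNReal.ofReal (coeff i * V (ea i) (eb i)) := fun i =>
    lint_norm_cmono (coeff i) (hco i) (ea i) (eb i)
  have hsum_ne_top : ∑' i : ℕ × ℕ,
      (∫⁻ p in T, ‖coeff i * (p.1 ^ ea i * p.2 ^ eb i / p.2)‖ₑ) ≠ ⊤ := by
    simp_rw [key]
    rw [← ENNReal.ofReal_tsum_of_nonneg (fun i => mul_nonneg (hco i) (V_nonneg _ _)) hs]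
    exact ENNReal.ofReal_ne_top
  have hint : IntegrableOn G T := by
    refine ⟨hGm.aestronglyMeasurable, ?_⟩
    rw [HasFiniteIntegral]
    have hGnn : ∀ p ∈ T, 0 ≤ G p := by
      intro p hp
      rw [hG p hp]
      exact tsum_nonneg (hterm_nonneg p hp)
    have : ∫⁻ p in T, ‖G p‖ₑ = ∫⁻ p in T,
        ∑' i : ℕ × ℕ, ENNReal.ofReal (coeff i * (p.1 ^ ea i * p.2 ^ eb i / p.2)) := by
      apply lintegral_congr_ae
      filter_upwards [ae_restrict_mem measT] with p hp
      rw [Real.enorm_eq_ofReal (hGnn p hp), hG p hp,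
        ENNReal.ofReal_tsum_of_nonneg (hterm_nonneg p hp) (hps p hp)]
    rw [this, lintegral_tsum (fun i =>
      (((measM (ea i) (eb i)).const_mul (coeff i)).ennreal_ofReal).aemeasurable), lt_top_iff_ne_top]
    convert hsum_ne_top using 2 with i
    funext i
    apply lintegral_congr_ae
    filter_upwards [ae_restrict_mem measT] with p hp
    rw [Real.enorm_eq_ofReal (hterm_nonneg p hp i)]
  refine ⟨hint, ?_⟩
  have : ∫ p in T, G p = ∫ p in T,
      ∑' i : ℕ × ℕ, coeff i * (p.1 ^ ea i * p.2 ^ eb i / p.2) := by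
    apply setIntegral_congr_fun measT
    intro p hp
    exact hG p hp
  rw [this, integral_tsum]
  · exact tsum_congr fun i => int_cmono (coeff i) (ea i) (eb i)
  · intro i
    exact ((measM (ea i) (eb i)).const_mul (coeff i)).aestronglyMeasurable
  · exact hsum_ne_top


lemma geom_div {c t : ℝ} (hc : 0 ≤ c) (ht : 0 ≤ t) (h1 : t * c < 1) :
    c / (1 - t * c) = ∑' n : ℕ, c ^ (n + 1) * t ^ n := by
  rw [div_eq_mul_inv, ← tsum_geometric_of_lt_one (mul_nonneg ht hc) h1, ← tsum_mul_left]
  exact tsum_congr fun n => by rw [mul_pow]; ring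

lemma geom_div_summable {c t : ℝ} (hc : 0 ≤ c) (ht : 0 ≤ t) (h1 : t * c < 1) :
    Summable fun n : ℕ => c ^ (n + 1) * t ^ n := by
  apply ((summable_geometric_of_lt_one (mul_nonneg ht hc) h1).mul_left c).congr
  intro n; rw [mul_pow]; ring

lemma summable_geom_prod {u v : ℝ} (hu0 : 0 ≤ u) (hu1 : u < 1) (hv0 : 0 ≤ v) (hv1 : v < 1) :
    Summable fun i : ℕ × ℕ => u ^ i.1 * v ^ i.2 :=
  (summable_geometric_of_lt_one hu0 hu1).mul_of_nonneg (summable_geometric_of_lt_one hv0 hv1)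
    (fun n => pow_nonneg hu0 n) (fun n => pow_nonneg hv0 n)

section XY
variable {x y : ℝ} (hx0 : 0 < x) (hx1 : x < 1) (hy0 : 0 < y) (hy1 : y < 1)

def G1 (x y : ℝ) : ℝ × ℝ → ℝ := fun p => (y / (1 - p.1 * y)) * (x / (1 - p.2 * x))
def G2 (x y : ℝ) : ℝ × ℝ → ℝ := fun p =>
  (2 * p.1 * x * y / (1 - p.1 ^ 2 * x * y)) * (y / (1 - p.2 * y))
def G3 (x y : ℝ) : ℝ × ℝ → ℝ := fun p =>
  (2 * p.1 * x * y / (1 - p.1 ^ 2 * x * y)) * (1 / (p.2 * (1 - p.2 * x)))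

lemma measG1 : Measurable (G1 x y) := by unfold G1; fun_prop
lemma measG2 : Measurable (G2 x y) := by unfold G2; fun_prop
lemma measG3 : Measurable (G3 x y) := by unfold G3; fun_prop

include hx0 hx1 hy0 hy1

lemma expand1 {p : ℝ × ℝ} (hp : p ∈ T) :
    G1 x y p = ∑' i : ℕ × ℕ,
      (y ^ (i.1 + 1) * x ^ (i.2 + 1)) * (p.1 ^ i.1 * p.2 ^ (i.2 + 1) / p.2) := by
  obtain ⟨hp1, hp12, hp2l⟩ := hp
  have hp2 : (0:ℝ) < p.2 := hp1.trans hp12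
  have hp1l : p.1 < 1 := hp12.trans hp2l
  have h1 : p.1 * y < 1 := by nlinarith
  have h2 : p.2 * x < 1 := by nlinarith
  have s1 := geom_div_summable hy0.le hp1.le h1
  have s2 := geom_div_summable hx0.le hp2.le h2
  have hprod : Summable fun i : ℕ × ℕ =>
      (y ^ (i.1 + 1) * p.1 ^ i.1) * (x ^ (i.2 + 1) * p.2 ^ i.2) :=
    s1.mul_of_nonneg s2 (fun n => by positivity) (fun n => by positivity)
  rw [G1, geom_div hy0.le hp1.le h1, geom_div hx0.le hp2.le h2, Summable.tsum_mul_tsum s1 s2 hprod]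
  exact tsum_congr fun i => by field_simp; ring

lemma expandF {p : ℝ × ℝ} (hp : p ∈ T) :
    2 * p.1 * x * y / (1 - p.1 ^ 2 * x * y) =
      ∑' k : ℕ, (2 * p.1) * ((x * y) ^ (k + 1) * (p.1 ^ 2) ^ k) := by
  obtain ⟨hp1, hp12, hp2l⟩ := hp
  have hp1l : p.1 < 1 := hp12.trans hp2l
  have h3 : p.1 ^ 2 * (x * y) < 1 :=
    lt_of_le_of_lt (mul_le_of_le_one_left (by positivity) (by nlinarith)) (by nlinarith)
  have e3 := geom_div (by positivity : (0:ℝ) ≤ x * y) (by positivity : (0:ℝ) ≤ p.1 ^ 2) h3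
  have : 2 * p.1 * x * y / (1 - p.1 ^ 2 * x * y) =
      (2 * p.1) * ((x * y) / (1 - p.1 ^ 2 * (x * y))) := by ring
  rw [this, e3, ← tsum_mul_left]

lemma summableF {p : ℝ × ℝ} (hp : p ∈ T) :
    Summable fun k : ℕ => (2 * p.1) * ((x * y) ^ (k + 1) * (p.1 ^ 2) ^ k) := by
  obtain ⟨hp1, hp12, hp2l⟩ := hp
  have hp1l : p.1 < 1 := hp12.trans hp2l
  have h3 : p.1 ^ 2 * (x * y) < 1 :=
    lt_of_le_of_lt (mul_le_of_le_one_left (by positivity) (by nlinarith)) (by nlinarith)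
  exact (geom_div_summable (by positivity) (by positivity) h3).mul_left _

lemma expand2 {p : ℝ × ℝ} (hp : p ∈ T) :
    G2 x y p = ∑' i : ℕ × ℕ,
      (2 * (x * y) ^ (i.1 + 1) * y ^ (i.2 + 1)) *
        (p.1 ^ (2 * i.1 + 1) * p.2 ^ (i.2 + 1) / p.2) := by
  obtain ⟨hp1, hp12, hp2l⟩ := hp
  have hp2 : (0:ℝ) < p.2 := hp1.trans hp12
  have hp1l : p.1 < 1 := hp12.trans hp2l
  have h4 : p.2 * y < 1 := by nlinarith
  have sF := summableF hx0 hx1 hy0 hy1 ⟨hp1, hp12, hp2l⟩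
  have s4 := geom_div_summable hy0.le hp2.le h4
  have hprod : Summable fun i : ℕ × ℕ =>
      ((2 * p.1) * ((x * y) ^ (i.1 + 1) * (p.1 ^ 2) ^ i.1)) * (y ^ (i.2 + 1) * p.2 ^ i.2) :=
    sF.mul_of_nonneg s4 (fun n => by positivity) (fun n => by positivity)
  rw [G2, expandF hx0 hx1 hy0 hy1 ⟨hp1, hp12, hp2l⟩, geom_div hy0.le hp2.le h4,
    Summable.tsum_mul_tsum sF s4 hprod]
  refine tsum_congr fun i => ?_
  rw [← pow_mul]
  field_simp
  ring

lemma expand3 {p : ℝ × ℝ} (hp : p ∈ T) :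
    G3 x y p = ∑' i : ℕ × ℕ,
      (2 * (x * y) ^ (i.1 + 1) * x ^ i.2) * (p.1 ^ (2 * i.1 + 1) * p.2 ^ i.2 / p.2) := by
  obtain ⟨hp1, hp12, hp2l⟩ := hp
  have hp2 : (0:ℝ) < p.2 := hp1.trans hp12
  have hp1l : p.1 < 1 := hp12.trans hp2l
  have h2 : p.2 * x < 1 := by nlinarith
  have sF := summableF hx0 hx1 hy0 hy1 ⟨hp1, hp12, hp2l⟩
  have sH : Summable fun j : ℕ => (1 / p.2) * (p.2 * x) ^ j :=
    (summable_geometric_of_lt_one (by positivity) h2).mul_left _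
  have eH : (1:ℝ) / (p.2 * (1 - p.2 * x)) = ∑' j : ℕ, (1 / p.2) * (p.2 * x) ^ j := by
    rw [tsum_mul_left, tsum_geometric_of_lt_one (by positivity) h2, one_div, mul_inv, one_div]
  have hprod : Summable fun i : ℕ × ℕ =>
      ((2 * p.1) * ((x * y) ^ (i.1 + 1) * (p.1 ^ 2) ^ i.1)) * ((1 / p.2) * (p.2 * x) ^ i.2) :=
    sF.mul_of_nonneg sH (fun n => by positivity) (fun n => by positivity)
  rw [G3, expandF hx0 hx1 hy0 hy1 ⟨hp1, hp12, hp2l⟩, eH, Summable.tsum_mul_tsum sF sH hprod]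
  refine tsum_congr fun i => ?_
  rw [← pow_mul, mul_pow]
  field_simp
  ring


lemma summable_cA : Summable fun i : ℕ × ℕ => y ^ (i.1 + 1) * x ^ (i.2 + 1) :=
  (((summable_geom_prod hy0.le hy1 hx0.le hx1).mul_left (y * x)).congr fun i => by ring)

lemma summable_cD : Summable fun i : ℕ × ℕ => 2 * (x * y) ^ (i.1 + 1) * y ^ (i.2 + 1) :=
  ((((summable_geom_prod (u := x*y) (v := y) (by positivity) (by nlinarith) hy0.le hy1).mul_left
    (2 * (x * y) * y)).congr) fun i => by ring)

lemma summable_cE : Summable fun i : ℕ × ℕ => 2 * (x * y) ^ (i.1 + 1) * x ^ i.2 :=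
  ((((summable_geom_prod (u := x*y) (v := x) (by positivity) (by nlinarith) hx0.le hx1).mul_left
    (2 * (x * y))).congr) fun i => by ring)

lemma resG1 : IntegrableOn (G1 x y) T ∧
    ∫ p in T, G1 x y p = ∑' i : ℕ × ℕ, (y ^ (i.1 + 1) * x ^ (i.2 + 1)) * V i.1 (i.2 + 1) :=
  integral_expand _ (fun i => by positivity) (fun i => i.1) (fun i => i.2 + 1)
    (summable_cA hx0 hx1 hy0 hy1) (fun i => by show 1 ≤ i.1 + (i.2 + 1); omega) (G1 x y) measG1
    (fun p hp => expand1 hx0 hx1 hy0 hy1 hp)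

lemma resG2 : IntegrableOn (G2 x y) T ∧
    ∫ p in T, G2 x y p = ∑' i : ℕ × ℕ,
      (2 * (x * y) ^ (i.1 + 1) * y ^ (i.2 + 1)) * V (2 * i.1 + 1) (i.2 + 1) :=
  integral_expand _ (fun i => by positivity) (fun i => 2 * i.1 + 1) (fun i => i.2 + 1)
    (summable_cD hx0 hx1 hy0 hy1) (fun i => by show 1 ≤ 2 * i.1 + 1 + (i.2 + 1); omega) (G2 x y) measG2
    (fun p hp => expand2 hx0 hx1 hy0 hy1 hp)

lemma resG3 : IntegrableOn (G3 x y) T ∧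
    ∫ p in T, G3 x y p = ∑' i : ℕ × ℕ,
      (2 * (x * y) ^ (i.1 + 1) * x ^ i.2) * V (2 * i.1 + 1) i.2 :=
  integral_expand _ (fun i => by positivity) (fun i => 2 * i.1 + 1) (fun i => i.2)
    (summable_cE hx0 hx1 hy0 hy1) (fun i => by show 1 ≤ 2 * i.1 + 1 + i.2; omega) (G3 x y) measG3
    (fun p hp => expand3 hx0 hx1 hy0 hy1 hp)


end XY

def sSet : Set (ℕ × ℕ) := {i | i.2 < i.1}

def eψ : ℕ × ℕ ≃ ↥(sSetᶜ) where
  toFun q := ⟨(q.1, q.1 + q.2), by simp [sSet]⟩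
  invFun i := (i.1.1, i.1.2 - i.1.1)
  left_inv q := by simp
  right_inv i := by
    obtain ⟨⟨m, n⟩, h⟩ := i
    simp only [sSet, Set.mem_compl_iff, Set.mem_setOf_eq, not_lt] at h
    apply Subtype.ext
    simp only []
    exact Prod.ext rfl (by omega)

def eφ : ℕ × ℕ ≃ ↥sSet where
  toFun q := ⟨(q.1 + q.2 + 1, q.1), by simp [sSet]⟩
  invFun i := (i.1.2, i.1.1 - i.1.2 - 1)
  left_inv q := by
    simp only []
    exact Prod.ext rfl (by omega)
  right_inv i := by
    obtain ⟨⟨m, n⟩, h⟩ := i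
    simp only [sSet, Set.mem_setOf_eq] at h
    apply Subtype.ext
    simp only []
    exact Prod.ext (by omega) rfl

lemma summable_mulV (c : ℕ × ℕ → ℝ) (hc : ∀ i, 0 ≤ c i) (hcs : Summable c)
    (ea eb : ℕ × ℕ → ℕ) : Summable fun i => c i * V (ea i) (eb i) :=
  hcs.of_nonneg_of_le (fun i => mul_nonneg (hc i) (V_nonneg _ _))
    (fun i => mul_le_of_le_one_right (hc i) (V_le_one _ _))

section XY2
variable {x y : ℝ} (hx0 : 0 < x) (hx1 : x < 1) (hy0 : 0 < y) (hy1 : y < 1)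
include hx0 hx1 hy0 hy1

set_option maxHeartbeats 2000000 in
lemma series_algebra :
    ∑' i : ℕ × ℕ, x ^ (i.1 + 1) * y ^ (i.1 + i.2 + 2) /
        (((i.1 : ℝ) + 1) * ((i.1 : ℝ) + (i.2 : ℝ) + 2)) =
      (∑' i : ℕ × ℕ, (y ^ (i.1 + 1) * x ^ (i.2 + 1)) * V i.1 (i.2 + 1)) +
      (∑' i : ℕ × ℕ, (2 * (x * y) ^ (i.1 + 1) * y ^ (i.2 + 1)) * V (2 * i.1 + 1) (i.2 + 1)) -
      ∑' i : ℕ × ℕ, (2 * (x * y) ^ (i.1 + 1) * x ^ i.2) * V (2 * i.1 + 1) i.2 := by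
  set A := fun i : ℕ × ℕ => (y ^ (i.1 + 1) * x ^ (i.2 + 1)) * V i.1 (i.2 + 1) with hAdef
  set D := fun i : ℕ × ℕ =>
    (2 * (x * y) ^ (i.1 + 1) * y ^ (i.2 + 1)) * V (2 * i.1 + 1) (i.2 + 1) with hDdef
  set E := fun i : ℕ × ℕ => (2 * (x * y) ^ (i.1 + 1) * x ^ i.2) * V (2 * i.1 + 1) i.2 with hEdef
  have hA : Summable A :=
    summable_mulV _ (fun i => by positivity) (summable_cA hx0 hx1 hy0 hy1) _ _
  have hD : Summable D :=
    summable_mulV _ (fun i => by positivity) (summable_cD hx0 hx1 hy0 hy1) _ _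
  have hsplit := hA.tsum_subtype_add_tsum_subtype_compl sSet
  have hcompl : ∑' i : ↥(sSetᶜ), A ↑i = ∑' i : ℕ × ℕ, E i := by
    rw [← Equiv.tsum_eq eψ (fun i : ↥(sSetᶜ) => A ↑i)]
    refine tsum_congr fun q => ?_
    show A (q.1, q.1 + q.2) = E q
    rw [hAdef, hEdef]
    simp only [V]
    have h1 : ((q.1 : ℝ) + 1) ≠ 0 := by positivity
    have h2 : ((q.1 : ℝ) + ((q.1 : ℝ) + (q.2 : ℝ) + 1) + 2) ≠ 0 := by positivity
    push_cast
    field_simp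
    ring
  have hAφ : Summable fun q : ℕ × ℕ => A ((eφ q) : ℕ × ℕ) :=
    (Equiv.summable_iff eφ).mpr (hA.subtype sSet)
  have hmain : ∑' i : ℕ × ℕ, x ^ (i.1 + 1) * y ^ (i.1 + i.2 + 2) /
      (((i.1 : ℝ) + 1) * ((i.1 : ℝ) + (i.2 : ℝ) + 2)) =
      (∑' i : ↥sSet, A ↑i) + ∑' i, D i := by
    rw [← Equiv.tsum_eq eφ (fun i : ↥sSet => A ↑i), ← Summable.tsum_add hAφ hD]
    refine tsum_congr fun q => ?_
    show _ = A (q.1 + q.2 + 1, q.1) + D q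
    rw [hAdef, hDdef]
    simp only [V]
    push_cast
    field_simp
    ring
  rw [hmain, ← hcompl]
  linarith [hsplit]

end XY2
end DLog

namespace DLog

def eK : ℕ × ℕ ≃ {k : Fin 2 → ℕ // StrictMono k ∧ ∀ i, 0 < k i} where
  toFun q := ⟨![q.1 + 1, q.1 + q.2 + 2], by
    constructor
    · intro a b hab
      fin_cases a <;> fin_cases b <;> simp_all <;> omega
    · intro i
      fin_cases i <;> simp⟩
  invFun k := (k.1 0 - 1, k.1 1 - k.1 0 - 1)
  left_inv q := by
    simp only [Matrix.cons_val_zero, Matrix.cons_val_one, Matrix.head_cons]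
    exact Prod.ext (by omega) (by omega)
  right_inv k := by
    obtain ⟨k, hmono, hpos⟩ := k
    have h01 : k 0 < k 1 := hmono (by norm_num : (0 : Fin 2) < 1)
    have h0 : 0 < k 0 := hpos 0
    apply Subtype.ext
    simp only []
    funext i
    fin_cases i <;> simp <;> omega

lemma li_eq (x y : ℝ) : multiPolylogReal 2 (fun _ => 1) ![x, y] =
    ∑' i : ℕ × ℕ, x ^ (i.1 + 1) * y ^ (i.1 + i.2 + 2) /
      (((i.1 : ℝ) + 1) * ((i.1 : ℝ) + (i.2 : ℝ) + 2)) := by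
  rw [multiPolylogReal, ← Equiv.tsum_eq eK]
  refine (tsum_congr fun q => ?_).symm
  simp only [eK, Equiv.coe_fn_mk, Fin.prod_univ_two, Matrix.cons_val_zero, Matrix.cons_val_one,
    Matrix.head_cons, pow_one]
  rw [div_mul_div_comm]
  push_cast
  ring
end DLog


set_option maxHeartbeats 2000000 in
/-- for `0 < x < 1`, `0 < y < 1`, the displayed function is integrable on the
open simplex `{0 < t₁ < t₂ < 1} ⊂ ℝ²` and the double logarithm `Li_{1,1}(x,y)` equals its
integral over that simplex. -/
theorem doubleLog_eq_integral (x y : ℝ) (hx0 : 0 < x) (hx1 : x < 1) (hy0 : 0 < y)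
    (hy1 : y < 1) :
    let S : Set (Fin 2 → ℝ) := {t | 0 < t 0 ∧ t 0 < t 1 ∧ t 1 < 1}
    let g : (Fin 2 → ℝ) → ℝ := fun t =>
      (y / (1 - t 0 * y)) * (x / (1 - t 1 * x)) +
        (2 * t 0 * x * y / (1 - (t 0) ^ 2 * x * y)) *
          (y / (1 - t 1 * y) + 1 / (t 1 * (t 1 * x - 1)))
    IntegrableOn g S ∧ multiPolylogReal 2 (fun _ => 1) ![x, y] = ∫ t in S, g t := by
  intro S g
  classical
  have e : (Fin 2 → ℝ) ≃ᵐ (ℝ × ℝ) := MeasurableEquiv.finTwoArrow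
  have hvp : MeasurePreserving (MeasurableEquiv.finTwoArrow : (Fin 2 → ℝ) ≃ᵐ (ℝ × ℝ))
      volume volume := volume_preserving_finTwoArrow ℝ
  have hemb : MeasurableEmbedding (MeasurableEquiv.finTwoArrow : (Fin 2 → ℝ) ≃ᵐ (ℝ × ℝ)) :=
    MeasurableEquiv.measurableEmbedding _
  set Gf : ℝ × ℝ → ℝ := fun p =>
    (y / (1 - p.1 * y)) * (x / (1 - p.2 * x)) +
      (2 * p.1 * x * y / (1 - p.1 ^ 2 * x * y)) *
        (y / (1 - p.2 * y) + 1 / (p.2 * (p.2 * x - 1))) with hGf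
  have hge : g = fun t => Gf ((MeasurableEquiv.finTwoArrow : (Fin 2 → ℝ) ≃ᵐ (ℝ × ℝ)) t) := rfl
  have hSpre : S = (MeasurableEquiv.finTwoArrow : (Fin 2 → ℝ) ≃ᵐ (ℝ × ℝ)) ⁻¹' DLog.T := rfl
  have hTeq : Set.EqOn Gf (fun p => DLog.G1 x y p + DLog.G2 x y p - DLog.G3 x y p) DLog.T := by
    intro p hp
    obtain ⟨hp1, hp12, hp2l⟩ := hp
    have hp2 : (0 : ℝ) < p.2 := hp1.trans hp12
    have hp1l : p.1 < 1 := hp12.trans hp2l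
    have hne1 : 1 - p.1 * y ≠ 0 := ne_of_gt (by nlinarith)
    have hne2 : 1 - p.2 * x ≠ 0 := ne_of_gt (by nlinarith)
    have hsq : p.1 ^ 2 * (x * y) < 1 :=
      lt_of_le_of_lt (mul_le_of_le_one_left (by positivity) (by nlinarith)) (by nlinarith)
    have hne3 : 1 - p.1 ^ 2 * x * y ≠ 0 := ne_of_gt (by nlinarith)
    have hne4 : 1 - p.2 * y ≠ 0 := ne_of_gt (by nlinarith)
    have hne5 : p.2 ≠ 0 := ne_of_gt hp2
    have hne6 : p.2 * x - 1 ≠ 0 := ne_of_lt (by nlinarith)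
    simp only [hGf, DLog.G1, DLog.G2, DLog.G3]
    rw [show 1 / (p.2 * (p.2 * x - 1)) = -(1 / (p.2 * (1 - p.2 * x))) by
      rw [show p.2 * x - 1 = -(1 - p.2 * x) by ring, mul_neg, div_neg]]
    ring
  obtain ⟨hi1, hv1⟩ := DLog.resG1 hx0 hx1 hy0 hy1
  obtain ⟨hi2, hv2⟩ := DLog.resG2 hx0 hx1 hy0 hy1
  obtain ⟨hi3, hv3⟩ := DLog.resG3 hx0 hx1 hy0 hy1
  have hiG : IntegrableOn Gf DLog.T :=
    MeasureTheory.IntegrableOn.congr_fun ((hi1.add hi2).sub hi3)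
      (fun p hp => (hTeq hp).symm) DLog.measT
  constructor
  · rw [hSpre, hge, IntegrableOn]
    exact ((hvp.restrict_preimage_emb hemb DLog.T).integrable_comp_emb hemb).mpr hiG
  · have hig : ∫ t in S, g t = ∫ p in DLog.T, Gf p := by
      rw [hSpre, hge]
      exact hvp.setIntegral_preimage_emb hemb Gf DLog.T
    have hint : ∫ p in DLog.T, Gf p = (∫ p in DLog.T, DLog.G1 x y p) +
        (∫ p in DLog.T, DLog.G2 x y p) - ∫ p in DLog.T, DLog.G3 x y p := by
      have h12 : IntegrableOn (fun p => DLog.G1 x y p + DLog.G2 x y p) DLog.T := hi1.add hi2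
      rw [setIntegral_congr_fun DLog.measT hTeq, integral_sub h12 hi3, integral_add hi1 hi2]
    rw [hig, hint, hv1, hv2, hv3, DLog.li_eq]
    exact DLog.series_algebra hx0 hx1 hy0 hy1
end
end
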